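/- arXiv:1401.7381 — 4 statements merged into one kernel-verified Lean document; each statement's English description precedes it below -/
import Mathlib

section
/- For all integers k ≥ 2 and N ≥ 1 and 0 ≤ n ≤ N, the number of k-uniform rooted forests with vertex set [N] and root set [n] equals n·(N−n)!·N^{m̃−1}/( m̃! · ((k−1)!)^{m̃} ) if m̃ := (N−n)/(k−1) is a nonnegative integer, and equals 0 otherwise. (Here m̃ is the number of edges of such a forest.) -/
namespace Stmt1

/-- Two vertices are adjacent in a hypergraph if some edge contains both. -/
def adj {N : ℕ} (H : Finset (Finset (Fin N))) (u v : Fin N) : Prop :=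
  ∃ e ∈ H, u ∈ e ∧ v ∈ e

/-- `u` and `v` are joined by a path iff `v` is reachable from `u` by steps along edges. -/
def Reach {N : ℕ} (H : Finset (Finset (Fin N))) : Fin N → Fin N → Prop :=
  Relation.ReflTransGen (adj H)

/-- A cycle: a sequence `(v_0, E_0, …, v_k, E_k)` (with at least two edges) of distinct
vertices and distinct edges such that `v_i ∈ E_i` and `v_{i+1} ∈ E_i`, indices mod `k+1`. -/
def HasCycle {N : ℕ} (H : Finset (Finset (Fin N))) : Prop :=
  ∃ (k : ℕ) (v : Fin (k + 2) → Fin N) (E : Fin (k + 2) → Finset (Fin N)),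
    Function.Injective v ∧ Function.Injective E ∧
    (∀ i, E i ∈ H) ∧ (∀ i, v i ∈ E i ∧ v (i + 1) ∈ E i)

/-- A forest is a hypergraph with no cycle. -/
def IsForest {N : ℕ} (H : Finset (Finset (Fin N))) : Prop := ¬ HasCycle H

/-- A rooted forest with root set `S`: a forest in which every connected component
contains exactly one vertex of `S` (every vertex reaches exactly one root). -/
def IsRootedForest {N : ℕ} (H : Finset (Finset (Fin N))) (S : Set (Fin N)) : Prop :=
  IsForest H ∧ ∀ v : Fin N, ∃! r : Fin N, r ∈ S ∧ Reach H v r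

/-- Number of `k`-uniform rooted forests with vertex set `[N]` and root set `[n]`. -/
noncomputable def numRootedForests (N n k : ℕ) : ℕ :=
  Set.ncard {H : Finset (Finset (Fin N)) |
    (∀ e ∈ H, e.card = k) ∧ IsRootedForest H {v : Fin N | (v : ℕ) < n}}

/-!
Double counting. A *legal run* starts from the edgeless hypergraph on `[N]`, in which every
vertex is its own root, and repeatedly adds an edge made of an arbitrary vertex `u` and `k - 1`
current roots other than the root of `u`; these roots then stop being roots. With `r` roots
there are `N · C(r - 1, k - 1)` choices, and each step lowers `r` by `k - 1`, so there are
`∏_{j<m} N · C(N - j(k-1) - 1, k-1)` runs of length `m`.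

Every run ends in a `k`-uniform rooted forest with `m` edges and `n = N - m(k-1)` roots, and
every such forest comes from exactly `m!` runs, one per ordering of its edges: deleting an edge
`e` of a rooted forest leaves exactly one vertex of `e` joined to a root, and the other vertices
of `e` become roots, so the last move is read off the forest and its last edge. Relabelling the
vertices shows that the number `F` of forests does not depend on which `n` vertices are the
roots. Hence `C(N, n) · F · m! = N^m ∏_{j<m} C(N - j(k-1) - 1, k-1)`, and the product telescopes
to `(N - 1)! / ((k-1)!^m (n-1)!)`.
-/

open scoped Classical

variable {N : ℕ}

section Reach

variable {H H' : Finset (Finset (Fin N))} {e : Finset (Fin N)} {u v w : Fin N}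

lemma adj.symm (h : adj H u v) : adj H v u :=
  let ⟨e, he, hu, hv⟩ := h; ⟨e, he, hv, hu⟩

lemma Reach.refl : Reach H v v := Relation.ReflTransGen.refl

lemma Reach.trans (h₁ : Reach H u v) (h₂ : Reach H v w) : Reach H u w :=
  Relation.ReflTransGen.trans h₁ h₂

lemma Reach.symm (h : Reach H u v) : Reach H v u := by
  induction h with
  | refl => exact Reach.refl
  | tail _ hadj ih => exact Relation.ReflTransGen.head hadj.symm ih

lemma Reach.mono (hHH' : H ⊆ H') (h : Reach H u v) : Reach H' u v :=
  Relation.ReflTransGen.mono (fun _ _ ⟨e, he, hx, hy⟩ => ⟨e, hHH' he, hx, hy⟩ : adj H ≤ adj H')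
    u v h

lemma reach_of_mem (he : e ∈ H) (hu : u ∈ e) (hv : v ∈ e) : Reach H u v :=
  Relation.ReflTransGen.single ⟨e, he, hu, hv⟩

lemma reach_empty_iff : Reach (∅ : Finset (Finset (Fin N))) u v ↔ u = v := by
  refine ⟨fun h => ?_, fun h => h ▸ Reach.refl⟩
  induction h with
  | refl => rfl
  | tail _ hadj => obtain ⟨e, he, -⟩ := hadj; exact absurd he (Finset.notMem_empty e)

lemma reach_insert_iff :
    Reach (insert e H) v w ↔ Reach H v w ∨ ∃ x ∈ e, ∃ y ∈ e, Reach H v x ∧ Reach H y w := by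
  constructor
  · intro h
    induction h with
    | refl => exact .inl Reach.refl
    | tail _ hadj ih =>
      obtain ⟨f, hf, hb, hc⟩ := hadj
      rcases Finset.mem_insert.1 hf with rfl | hfH
      · rcases ih with h | ⟨x, hx, -, -, h, -⟩
        · exact .inr ⟨_, hb, _, hc, h, Reach.refl⟩
        · exact .inr ⟨x, hx, _, hc, h, Reach.refl⟩
      · rcases ih with h | ⟨x, hx, y, hy, h₁, h₂⟩
        · exact .inl (Relation.ReflTransGen.tail h ⟨f, hfH, hb, hc⟩)
        · exact .inr ⟨x, hx, y, hy, h₁, Relation.ReflTransGen.tail h₂ ⟨f, hfH, hb, hc⟩⟩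
  · have hsub := Finset.subset_insert e H
    rintro (h | ⟨x, hx, y, hy, h₁, h₂⟩)
    · exact h.mono hsub
    · exact ((h₁.mono hsub).trans (reach_of_mem (Finset.mem_insert_self e H) hx hy)).trans
        (h₂.mono hsub)

lemma Reach.erase_or_exists_mem (h : Reach H v w) :
    Reach (H.erase e) v w ∨ ∃ y ∈ e, Reach (H.erase e) v y := by
  induction h with
  | refl => exact .inl Reach.refl
  | tail _ hadj ih =>
    obtain ⟨f, hf, hb, hc⟩ := hadj
    by_cases hfe : f = e
    · subst hfe
      exact .inr (ih.elim (fun h => ⟨_, hb, h⟩) id)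
    · exact ih.imp_left fun h =>
        Relation.ReflTransGen.tail h ⟨f, Finset.mem_erase.2 ⟨hfe, hf⟩, hb, hc⟩

end Reach

section Cycles

variable {H : Finset (Finset (Fin N))} {e : Finset (Fin N)}

/-- A walk of length `n`: vertices `w 0, …, w n` and edges `f 0, …, f (n - 1)` with
`w i, w (i + 1) ∈ f i`; the values of `w` and `f` beyond these indices are irrelevant. -/
def IsWalk (H : Finset (Finset (Fin N))) (n : ℕ) (w : ℕ → Fin N) (f : ℕ → Finset (Fin N)) :
    Prop :=
  ∀ i < n, f i ∈ H ∧ w i ∈ f i ∧ w (i + 1) ∈ f i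

lemma Reach.exists_walk {x y : Fin N} (h : Reach H x y) :
    ∃ n w f, IsWalk H n w f ∧ w 0 = x ∧ w n = y := by
  induction h with
  | refl => exact ⟨0, fun _ => x, fun _ => ∅, fun i hi => absurd hi i.not_lt_zero, rfl, rfl⟩
  | @tail b c _ hbc ih =>
    obtain ⟨n, w, f, hw, hw₀, hwn⟩ := ih
    obtain ⟨g, hg, hb, hc⟩ := hbc
    refine ⟨n + 1, fun t => if t ≤ n then w t else c, fun t => if t < n then f t else g,
      fun i hi => ?_, by simpa using hw₀, by simp⟩
    rcases Nat.lt_or_ge i n with hin | hin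
    · simpa [hin, hin.le, Nat.succ_le_of_lt hin] using hw i hin
    · obtain rfl : i = n := by omega
      simpa [hwn] using ⟨hg, hb, hc⟩

lemma IsWalk.mono {n m : ℕ} {w : ℕ → Fin N} {f : ℕ → Finset (Fin N)} (hw : IsWalk H n w f)
    (hmn : m ≤ n) : IsWalk H m w f :=
  fun i hi => hw i (hi.trans_le hmn)

lemma IsWalk.skip {n i j : ℕ} {w : ℕ → Fin N} {f : ℕ → Finset (Fin N)} (hw : IsWalk H n w f)
    (hij : i < j) (hjn : j < n) (hwf : w i ∈ f j) :
    ∃ w' f', IsWalk H (n - (j - i)) w' f' ∧ w' 0 = w 0 ∧ w' (n - (j - i)) = w n := by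
  refine ⟨fun t => if t ≤ i then w t else w (t + (j - i)),
    fun t => if t < i then f t else f (t + (j - i)), fun t ht => ?_, by simp, ?_⟩
  · rcases lt_trichotomy t i with hti | rfl | hti
    · simpa [hti, hti.le, Nat.succ_le_of_lt hti] using hw t (by omega)
    · have hstep := hw j hjn
      simp only [le_refl, lt_irrefl, if_true, if_false, Nat.add_sub_cancel' hij.le,
        show ¬ t + 1 ≤ t by omega, show t + 1 + (j - t) = j + 1 by omega]
      exact ⟨hstep.1, hwf, hstep.2.2⟩
    · simpa [show ¬ t ≤ i by omega, show ¬ t < i by omega, show ¬ t + 1 ≤ i by omega,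
        show t + 1 + (j - i) = t + (j - i) + 1 by omega] using hw (t + (j - i)) (by omega)
  · simp [show ¬ n - (j - i) ≤ i by omega, show n - (j - i) + (j - i) = n by omega]

lemma IsWalk.exists_injective {n : ℕ} {w : ℕ → Fin N} {f : ℕ → Finset (Fin N)}
    (hw : IsWalk H n w f) :
    ∃ n' w' f', IsWalk H n' w' f' ∧ w' 0 = w 0 ∧ w' n' = w n ∧
      (∀ i j, i < j → j ≤ n' → w' i ≠ w' j) ∧ (∀ i j, i < j → j < n' → f' i ≠ f' j) := by
  induction n using Nat.strong_induction_on generalizing w f with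
  | _ n ih =>
  by_cases hv : ∃ i j, i < j ∧ j ≤ n ∧ w i = w j
  · obtain ⟨i, j, hij, hjn, hwij⟩ := hv
    rcases hjn.lt_or_eq with hjn | rfl
    · obtain ⟨w', f', hw', h₀, hn⟩ := hw.skip hij hjn (hwij ▸ (hw j hjn).2.1)
      obtain ⟨n'', w'', f'', hw'', h₀', hn', hinj⟩ := ih _ (by omega) hw'
      exact ⟨n'', w'', f'', hw'', h₀'.trans h₀, hn'.trans hn, hinj⟩
    · obtain ⟨n'', w'', f'', hw'', h₀', hn', hinj⟩ := ih i hij (hw.mono hij.le)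
      exact ⟨n'', w'', f'', hw'', h₀', hn'.trans hwij, hinj⟩
  by_cases hf : ∃ i j, i < j ∧ j < n ∧ f i = f j
  · obtain ⟨i, j, hij, hjn, hfij⟩ := hf
    obtain ⟨w', f', hw', h₀, hn⟩ := hw.skip hij hjn (hfij ▸ (hw i (hij.trans hjn)).2.1)
    obtain ⟨n'', w'', f'', hw'', h₀', hn', hinj⟩ := ih _ (by omega) hw'
    exact ⟨n'', w'', f'', hw'', h₀'.trans h₀, hn'.trans hn, hinj⟩
  push Not at hv hf
  exact ⟨n, w, f, hw, rfl, rfl, hv, hf⟩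

lemma hasCycle_of_injective_walk (he : e ∈ H) {m : ℕ} {w : ℕ → Fin N} {f : ℕ → Finset (Fin N)}
    (hw : IsWalk (H.erase e) (m + 1) w f) (hw₀ : w 0 ∈ e) (hwm : w (m + 1) ∈ e)
    (hwinj : ∀ i j, i < j → j ≤ m + 1 → w i ≠ w j)
    (hfinj : ∀ i j, i < j → j < m + 1 → f i ≠ f j) : HasCycle H := by
  have hfe : ∀ i < m + 1, f i ∈ H.erase e := fun i hi => (hw i hi).1
  refine ⟨m, fun t => w t, Fin.lastCases e fun i => f i, fun a b hab => ?_, fun a b hab => ?_,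
    fun t => ?_, fun t => ?_⟩
  · by_contra hne
    rcases Fin.lt_or_lt_of_ne hne with h | h
    · exact hwinj a b h (by omega) hab
    · exact hwinj b a h (by omega) hab.symm
  · induction a using Fin.lastCases <;> induction b using Fin.lastCases <;>
      simp only [Fin.lastCases_last, Fin.lastCases_castSucc] at hab
    · rfl
    · exact absurd hab.symm (Finset.mem_erase.1 (hfe _ (by omega))).1
    · exact absurd hab (Finset.mem_erase.1 (hfe _ (by omega))).1
    · rename_i a b
      rcases lt_trichotomy a b with h | rfl | h
      · exact absurd hab (hfinj a b h (by omega))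
      · rfl
      · exact absurd hab.symm (hfinj b a h (by omega))
  · induction t using Fin.lastCases
    · simpa using he
    · simpa using Finset.mem_of_mem_erase (hfe _ (by omega))
  · induction t using Fin.lastCases with
    | last => simpa using ⟨hwm, hw₀⟩
    | cast i => simpa [Fin.coeSucc_eq_succ] using (hw i (by omega)).2

lemma hasCycle_of_reach_erase (he : e ∈ H) {x y : Fin N} (hx : x ∈ e) (hy : y ∈ e)
    (hxy : x ≠ y) (h : Reach (H.erase e) x y) : HasCycle H := by
  obtain ⟨n, w, f, hw, rfl, rfl⟩ := h.exists_walk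
  obtain ⟨n', w', f', hw', hw'₀, hw'n, hwinj, hfinj⟩ := hw.exists_injective
  obtain ⟨m, rfl⟩ : ∃ m, n' = m + 1 :=
    Nat.exists_eq_succ_of_ne_zero fun h0 => hxy (by rw [← hw'₀, ← hw'n, h0])
  exact hasCycle_of_injective_walk he hw' (hw'₀ ▸ hx) (hw'n ▸ hy) hwinj hfinj

lemma IsForest.anti {H' : Finset (Finset (Fin N))} (hH : IsForest H) (hH'H : H' ⊆ H) :
    IsForest H' :=
  fun ⟨m, v, E, hv, hE, hEH, hvE⟩ => hH ⟨m, v, E, hv, hE, fun i => hH'H (hEH i), hvE⟩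

/-- Going around a cycle the long way avoids its last edge. -/
lemma reach_erase_last_of_cycle {k : ℕ} {v : Fin (k + 2) → Fin N}
    {E : Fin (k + 2) → Finset (Fin N)} (hE : Function.Injective E) (hEH : ∀ i, E i ∈ H)
    (hvE : ∀ i, v i ∈ E i ∧ v (i + 1) ∈ E i) :
    Reach (H.erase (E (Fin.last _))) (v 0) (v (Fin.last _)) := by
  suffices ∀ i : Fin (k + 2), Reach (H.erase (E (Fin.last _))) (v 0) (v i) from this _
  intro i
  induction i using Fin.induction with
  | zero => exact Reach.refl
  | succ i ih =>
    have hEi : E i.castSucc ∈ H.erase (E (Fin.last _)) :=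
      Finset.mem_erase.2 ⟨hE.ne (Fin.castSucc_ne_last i), hEH _⟩
    exact ih.trans (reach_of_mem hEi (hvE _).1 (Fin.coeSucc_eq_succ ▸ (hvE _).2))

lemma exists_reach_erase_of_hasCycle (hcyc : HasCycle H) (hfor : IsForest (H.erase e)) :
    ∃ x ∈ e, ∃ y ∈ e, x ≠ y ∧ Reach (H.erase e) x y := by
  obtain ⟨k, v, E, hv, hE, hEH, hvE⟩ := hcyc
  obtain ⟨j, rfl⟩ : ∃ j, E j = e := by
    by_contra! hj
    exact hfor ⟨k, v, E, hv, hE, fun i => Finset.mem_erase.2 ⟨hj i, hEH i⟩, hvE⟩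
  have hlast : Fin.last (k + 1) + (j + 1) = j := by
    rw [add_comm j, ← add_assoc, Fin.last_add_one, zero_add]
  have hrot := reach_erase_last_of_cycle (v := fun i => v (i + (j + 1)))
    (E := fun i => E (i + (j + 1))) (hE.comp (add_left_injective _)) (fun _ => hEH _)
    (fun i => by simpa only [add_right_comm i 1] using hvE (i + (j + 1)))
  simp only [hlast, zero_add] at hrot
  exact ⟨v (j + 1), (hvE j).2, v j, (hvE j).1, hv.ne (by simp), hrot⟩

end Cycles

section Config

/-- A hypergraph on `Fin N` with a map sending each vertex to the root of its component. -/
abbrev Config (N : ℕ) := Finset (Finset (Fin N)) × (Fin N → Fin N)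

/-- The move `(u, T)` adds the edge `insert u T`, hanging the components rooted at `T`
below `u`. -/
abbrev Move (N : ℕ) := Fin N × Finset (Fin N)

def Move.edge (p : Move N) : Finset (Fin N) := insert p.1 p.2

def Config.addEdge (s : Config N) (p : Move N) : Config N :=
  (insert p.edge s.1, fun v => if s.2 v ∈ insert (s.2 p.1) p.2 then s.2 p.1 else s.2 v)

def Config.roots (s : Config N) : Finset (Fin N) := {v | s.2 v = v}

structure Config.IsValid (k : ℕ) (s : Config N) : Prop where
  card_edge : ∀ e ∈ s.1, e.card = k
  isForest : IsForest s.1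
  reach_iff : ∀ v w, Reach s.1 v w ↔ s.2 v = s.2 w
  reach_root : ∀ v, Reach s.1 v (s.2 v)

structure IsLegalMove (k : ℕ) (s : Config N) (p : Move N) : Prop where
  card_snd : p.2.card = k - 1
  snd_subset_roots : p.2 ⊆ s.roots
  root_fst_notMem : s.2 p.1 ∉ p.2

variable {k : ℕ} {s : Config N} {p : Move N}

lemma Config.mem_roots {v : Fin N} : v ∈ s.roots ↔ s.2 v = v := by
  simp [Config.roots]

lemma Config.IsValid.root_root (hs : s.IsValid k) (v : Fin N) : s.2 (s.2 v) = s.2 v :=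
  ((hs.reach_iff v (s.2 v)).1 (hs.reach_root v)).symm

lemma Config.IsValid.root_mem_roots (hs : s.IsValid k) (v : Fin N) : s.2 v ∈ s.roots :=
  Config.mem_roots.2 (hs.root_root v)

lemma IsLegalMove.root_eq (hp : IsLegalMove k s p) {t : Fin N} (ht : t ∈ p.2) : s.2 t = t :=
  Config.mem_roots.1 (hp.snd_subset_roots ht)

lemma IsLegalMove.fst_notMem (hp : IsLegalMove k s p) : p.1 ∉ p.2 :=
  fun h => hp.root_fst_notMem (by rwa [hp.root_eq h])

lemma IsLegalMove.card_edge (hk : 0 < k) (hp : IsLegalMove k s p) : p.edge.card = k := by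
  rw [Move.edge, Finset.card_insert_of_notMem hp.fst_notMem, hp.card_snd]
  omega

lemma IsLegalMove.root_mem_of_mem_edge (hp : IsLegalMove k s p) {x : Fin N} (hx : x ∈ p.edge) :
    s.2 x ∈ insert (s.2 p.1) p.2 := by
  rcases Finset.mem_insert.1 hx with rfl | hxT
  · exact Finset.mem_insert_self _ _
  · rw [hp.root_eq hxT]; exact Finset.mem_insert_of_mem hxT

lemma IsLegalMove.root_injOn_edge (hp : IsLegalMove k s p) : Set.InjOn s.2 p.edge := by
  intro x hx y hy hxy
  rcases Finset.mem_insert.1 hx with rfl | hxT <;> rcases Finset.mem_insert.1 hy with rfl | hyT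
  · rfl
  · exact absurd (by rwa [hxy, hp.root_eq hyT]) hp.root_fst_notMem
  · exact absurd (by rwa [← hxy, hp.root_eq hxT]) hp.root_fst_notMem
  · rwa [hp.root_eq hxT, hp.root_eq hyT] at hxy

lemma IsLegalMove.edge_notMem (hk : 2 ≤ k) (hs : s.IsValid k) (hp : IsLegalMove k s p) :
    p.edge ∉ s.1 := by
  intro hmem
  obtain ⟨t, ht⟩ := Finset.card_pos.1 (by rw [hp.card_snd]; omega : 0 < p.2.card)
  have hroot := (hs.reach_iff _ _).1 (reach_of_mem hmem (Finset.mem_insert_self p.1 p.2)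
    (Finset.mem_insert_of_mem ht))
  exact hp.fst_notMem (hp.root_injOn_edge (Finset.mem_insert_self _ _)
    (Finset.mem_insert_of_mem ht) hroot ▸ ht)

lemma Config.IsValid.addEdge_fst_erase (hk : 2 ≤ k) (hs : s.IsValid k)
    (hp : IsLegalMove k s p) : (s.addEdge p).1.erase p.edge = s.1 :=
  Finset.erase_insert (hp.edge_notMem hk hs)

lemma Config.IsValid.addEdge_isForest (hk : 2 ≤ k) (hs : s.IsValid k) (hp : IsLegalMove k s p) :
    IsForest (s.addEdge p).1 := by
  intro hcyc
  have herase := hs.addEdge_fst_erase hk hp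
  obtain ⟨x, hx, y, hy, hxy, hR⟩ :=
    exists_reach_erase_of_hasCycle hcyc (herase ▸ hs.isForest)
  rw [herase] at hR
  exact hxy (hp.root_injOn_edge hx hy ((hs.reach_iff _ _).1 hR))

lemma Config.IsValid.exists_reach_mem_edge_iff (hs : s.IsValid k) (hp : IsLegalMove k s p)
    (z : Fin N) : (∃ x ∈ p.edge, Reach s.1 z x) ↔ s.2 z ∈ insert (s.2 p.1) p.2 := by
  refine ⟨fun ⟨x, hx, hzx⟩ => (hs.reach_iff z x).1 hzx ▸ hp.root_mem_of_mem_edge hx, fun hz => ?_⟩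
  rcases Finset.mem_insert.1 hz with hz | hz
  · exact ⟨p.1, Finset.mem_insert_self _ _, (hs.reach_iff _ _).2 hz⟩
  · exact ⟨s.2 z, Finset.mem_insert_of_mem hz, hs.reach_root z⟩

lemma Config.IsValid.addEdge_reach_iff (hs : s.IsValid k) (hp : IsLegalMove k s p)
    (v w : Fin N) : Reach (s.addEdge p).1 v w ↔ (s.addEdge p).2 v = (s.addEdge p).2 w := by
  have hreach : Reach (s.addEdge p).1 v w ↔
      s.2 v = s.2 w ∨ (s.2 v ∈ insert (s.2 p.1) p.2 ∧ s.2 w ∈ insert (s.2 p.1) p.2) := by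
    simp only [Config.addEdge]
    rw [reach_insert_iff, hs.reach_iff]
    refine or_congr_right ⟨fun ⟨x, hx, y, hy, hvx, hyw⟩ =>
      ⟨(hs.exists_reach_mem_edge_iff hp v).1 ⟨x, hx, hvx⟩,
        (hs.exists_reach_mem_edge_iff hp w).1 ⟨y, hy, hyw.symm⟩⟩, fun ⟨hv, hw⟩ => ?_⟩
    obtain ⟨x, hx, hvx⟩ := (hs.exists_reach_mem_edge_iff hp v).2 hv
    obtain ⟨y, hy, hwy⟩ := (hs.exists_reach_mem_edge_iff hp w).2 hw
    exact ⟨x, hx, y, hy, hvx, hwy.symm⟩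
  rw [hreach]
  simp only [Config.addEdge]
  have := Finset.mem_insert_self (s.2 p.1) p.2
  split_ifs <;> grind

lemma Config.IsValid.addEdge_root_root (hs : s.IsValid k) (v : Fin N) :
    (s.addEdge p).2 ((s.addEdge p).2 v) = (s.addEdge p).2 v := by
  simp only [Config.addEdge]
  split_ifs <;> simp_all [hs.root_root]

lemma Config.IsValid.addEdge (hk : 2 ≤ k) (hs : s.IsValid k) (hp : IsLegalMove k s p) :
    (s.addEdge p).IsValid k where
  card_edge e he := by
    rcases Finset.mem_insert.1 he with rfl | he
    exacts [hp.card_edge (by omega), hs.card_edge e he]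
  isForest := hs.addEdge_isForest hk hp
  reach_iff := hs.addEdge_reach_iff hp
  reach_root v := (hs.addEdge_reach_iff hp _ _).2 (hs.addEdge_root_root v).symm

lemma Config.IsValid.roots_addEdge (hs : s.IsValid k) (hp : IsLegalMove k s p) :
    (s.addEdge p).roots = s.roots \ p.2 := by
  ext v
  simp only [Finset.mem_sdiff, Config.mem_roots, Config.addEdge]
  have := hs.root_root p.1
  have := hp.root_fst_notMem
  split_ifs <;> grind

lemma Config.IsValid.root_fst_mem_roots_addEdge (hs : s.IsValid k) (hp : IsLegalMove k s p) :
    s.2 p.1 ∈ (s.addEdge p).roots := by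
  rw [hs.roots_addEdge hp]
  exact Finset.mem_sdiff.2 ⟨hs.root_mem_roots p.1, hp.root_fst_notMem⟩

end Config

section Runs

def build : List (Move N) → Config N
  | [] => (∅, id)
  | p :: l => (build l).addEdge p

def IsLegalRun (k : ℕ) : List (Move N) → Prop
  | [] => True
  | p :: l => IsLegalRun k l ∧ IsLegalMove k (build l) p

variable {k : ℕ}

lemma isValid_build_nil : (build ([] : List (Move N))).IsValid k where
  card_edge _ he := absurd he (Finset.notMem_empty _)
  isForest := fun ⟨_, _, _, _, _, hEH, _⟩ => Finset.notMem_empty _ (hEH 0)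
  reach_iff _ _ := reach_empty_iff
  reach_root _ := Reach.refl

lemma IsLegalRun.isValid (hk : 2 ≤ k) : ∀ {l : List (Move N)}, IsLegalRun k l → (build l).IsValid k
  | [], _ => isValid_build_nil
  | _ :: _, h => (h.1.isValid hk).addEdge hk h.2

lemma build_fst : ∀ l : List (Move N), (build l).1 = (l.map Move.edge).toFinset
  | [] => rfl
  | p :: l => by simp [build, Config.addEdge, build_fst l]

lemma IsLegalRun.nodup_map_edge (hk : 2 ≤ k) :
    ∀ {l : List (Move N)}, IsLegalRun k l → (l.map Move.edge).Nodup
  | [], _ => List.nodup_nil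
  | p :: l, h => by
    rw [List.map_cons, List.nodup_cons, ← List.mem_toFinset, ← build_fst]
    exact ⟨h.2.edge_notMem hk (h.1.isValid hk), h.1.nodup_map_edge hk⟩

lemma IsLegalRun.card_roots_add (hk : 2 ≤ k) :
    ∀ {l : List (Move N)}, IsLegalRun k l → (build l).roots.card + l.length * (k - 1) = N
  | [], _ => by simp [build, Config.roots]
  | p :: l, h => by
    have hsub := h.2.snd_subset_roots
    have hcard := h.1.card_roots_add hk
    rw [build, (h.1.isValid hk).roots_addEdge h.2, Finset.card_sdiff_of_subset hsub,
      List.length_cons, add_mul, one_mul]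
    have := Finset.card_le_card hsub
    have := h.2.card_snd
    omega

end Runs

section Decomposition

structure IsUniformRootedForest (k : ℕ) (H : Finset (Finset (Fin N))) (S : Finset (Fin N)) :
    Prop where
  card_edge : ∀ e ∈ H, e.card = k
  isForest : IsForest H
  existsUnique_root : ∀ v, ∃! r, r ∈ S ∧ Reach H v r

variable {k : ℕ} {H : Finset (Finset (Fin N))} {S : Finset (Fin N)} {e : Finset (Fin N)}

lemma isUniformRootedForest_iff :
    IsUniformRootedForest k H S ↔ (∀ e ∈ H, e.card = k) ∧ IsRootedForest H S :=
  ⟨fun ⟨h₁, h₂, h₃⟩ => ⟨h₁, h₂, h₃⟩, fun ⟨h₁, h₂, h₃⟩ => ⟨h₁, h₂, h₃⟩⟩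

lemma Config.IsValid.isUniformRootedForest {s : Config N} (hs : s.IsValid k) :
    IsUniformRootedForest k s.1 s.roots where
  card_edge := hs.card_edge
  isForest := hs.isForest
  existsUnique_root v := ⟨s.2 v, ⟨hs.root_mem_roots v, hs.reach_root v⟩, fun r ⟨hr, hvr⟩ => by
    rw [(hs.reach_iff v r).1 hvr, Config.mem_roots.1 hr]⟩

lemma IsUniformRootedForest.eq_univ_of_empty (hF : IsUniformRootedForest k ∅ S) :
    S = Finset.univ := by
  refine Finset.eq_univ_of_forall fun v => ?_
  obtain ⟨r, ⟨hr, hvr⟩, -⟩ := hF.existsUnique_root v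
  rwa [reach_empty_iff.1 hvr]

/-- Distinct `p₁, p₂` would either close a cycle with `e` or join two roots. -/
lemma IsUniformRootedForest.eq_of_reach_erase (hF : IsUniformRootedForest k H S) (he : e ∈ H)
    {p₁ p₂ r₁ r₂ : Fin N} (hp₁ : p₁ ∈ e) (hp₂ : p₂ ∈ e) (hr₁ : r₁ ∈ S) (hr₂ : r₂ ∈ S)
    (h₁ : Reach (H.erase e) p₁ r₁) (h₂ : Reach (H.erase e) p₂ r₂) : p₁ = p₂ := by
  by_contra hne
  obtain rfl : r₁ = r₂ := by
    have hsub := Finset.erase_subset e H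
    exact (hF.existsUnique_root p₁).unique ⟨hr₁, h₁.mono hsub⟩
      ⟨hr₂, (reach_of_mem he hp₁ hp₂).trans (h₂.mono hsub)⟩
  exact hF.isForest (hasCycle_of_reach_erase he hp₁ hp₂ hne (h₁.trans h₂.symm))

lemma IsUniformRootedForest.exists_reach_erase (hk : 0 < k) (hF : IsUniformRootedForest k H S)
    (he : e ∈ H) : ∃ p ∈ e, ∃ r ∈ S, Reach (H.erase e) p r := by
  obtain ⟨v, hv⟩ := Finset.card_pos.1 (hF.card_edge e he ▸ hk)
  obtain ⟨r, ⟨hr, hvr⟩, -⟩ := hF.existsUnique_root v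
  rcases hvr.symm.erase_or_exists_mem (e := e) with h | ⟨y, hy, h⟩
  exacts [⟨v, hv, r, hr, h.symm⟩, ⟨y, hy, r, hr, h.symm⟩]

section Parent

variable (hF : IsUniformRootedForest k H S) (he : e ∈ H) {p r₀ : Fin N} (hp : p ∈ e)
  (hr₀ : r₀ ∈ S) (hpr₀ : Reach (H.erase e) p r₀)
include hF he hp hr₀ hpr₀

lemma IsUniformRootedForest.disjoint_erase : Disjoint S (e.erase p) :=
  Finset.disjoint_right.2 fun _ ht htS =>
    (Finset.mem_erase.1 ht).1 (hF.eq_of_reach_erase he (Finset.mem_erase.1 ht).2 hp htS hr₀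
      Reach.refl hpr₀)

lemma IsUniformRootedForest.erase : IsUniformRootedForest k (H.erase e) (S ∪ e.erase p) := by
  have hsub := Finset.erase_subset e H
  refine ⟨fun f hf => hF.card_edge f (hsub hf), hF.isForest.anti hsub, fun v => ?_⟩
  obtain ⟨r, hr, hvr⟩ : ∃ r ∈ S ∪ e.erase p, Reach (H.erase e) v r := by
    obtain ⟨r, ⟨hrS, hvr⟩, -⟩ := hF.existsUnique_root v
    rcases hvr.erase_or_exists_mem (e := e) with h | ⟨y, hy, h⟩
    · exact ⟨r, Finset.mem_union_left _ hrS, h⟩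
    · by_cases hyp : y = p
      · subst hyp
        exact ⟨r₀, Finset.mem_union_left _ hr₀, h.trans hpr₀⟩
      · exact ⟨y, Finset.mem_union_right _ (Finset.mem_erase.2 ⟨hyp, hy⟩), h⟩
  refine ⟨r, ⟨hr, hvr⟩, fun r' ⟨hr', hvr'⟩ => ?_⟩
  by_contra hne
  have hr'r : Reach (H.erase e) r' r := hvr'.symm.trans hvr
  rcases Finset.mem_union.1 hr with hr | hr <;> rcases Finset.mem_union.1 hr' with hr' | hr'
  · exact hne ((hF.existsUnique_root v).unique ⟨hr', hvr'.mono hsub⟩ ⟨hr, hvr.mono hsub⟩)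
  · exact (Finset.mem_erase.1 hr').1
      (hF.eq_of_reach_erase he (Finset.mem_erase.1 hr').2 hp hr hr₀ hr'r hpr₀)
  · exact (Finset.mem_erase.1 hr).1
      (hF.eq_of_reach_erase he (Finset.mem_erase.1 hr).2 hp hr' hr₀ hr'r.symm hpr₀)
  · exact hF.isForest (hasCycle_of_reach_erase he (Finset.mem_erase.1 hr').2
      (Finset.mem_erase.1 hr).2 hne hr'r)

lemma IsUniformRootedForest.isLegalMove {s : Config N} (hs : s.IsValid k)
    (hsH : s.1 = H.erase e) (hsS : s.roots = S ∪ e.erase p) : IsLegalMove k s (p, e.erase p) where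
  card_snd := by rw [Finset.card_erase_of_mem hp, hF.card_edge e he]
  snd_subset_roots := hsS ▸ Finset.subset_union_right
  root_fst_notMem := by
    have hr₀root : s.2 r₀ = r₀ := Config.mem_roots.1 (hsS ▸ Finset.mem_union_left _ hr₀)
    rw [(hs.reach_iff p r₀).1 (hsH ▸ hpr₀), hr₀root]
    exact Finset.disjoint_left.1 (hF.disjoint_erase he hp hr₀ hpr₀) hr₀

end Parent

lemma exists_isLegalRun_of_isUniformRootedForest (hk : 2 ≤ k) :
    ∀ {L : List (Finset (Fin N))} {S : Finset (Fin N)}, L.Nodup →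
      IsUniformRootedForest k L.toFinset S →
      ∃ l : List (Move N), IsLegalRun k l ∧ (build l).roots = S ∧ l.map Move.edge = L
  | [], S, _, hF => by
    refine ⟨[], trivial, ?_, rfl⟩
    rw [(by simpa using hF : IsUniformRootedForest k ∅ S).eq_univ_of_empty]
    simp [build, Config.roots]
  | e :: L, S, hnd, hF => by
    rw [List.nodup_cons, ← List.mem_toFinset] at hnd
    have he : e ∈ (e :: L).toFinset := List.mem_toFinset.2 List.mem_cons_self
    have herase : (e :: L).toFinset.erase e = L.toFinset := by
      rw [List.toFinset_cons, Finset.erase_insert hnd.1]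
    obtain ⟨p, hp, r₀, hr₀, hpr₀⟩ := hF.exists_reach_erase (by omega) he
    obtain ⟨l, hl, hroots, hedges⟩ := exists_isLegalRun_of_isUniformRootedForest hk hnd.2
      (herase ▸ hF.erase he hp hr₀ hpr₀)
    have hmove := hF.isLegalMove he hp hr₀ hpr₀ (hl.isValid hk)
      (by rw [build_fst, hedges, herase]) hroots
    refine ⟨(p, e.erase p) :: l, ⟨hl, hmove⟩, ?_, ?_⟩
    · rw [build, (hl.isValid hk).roots_addEdge hmove, hroots,
        Finset.union_sdiff_cancel_right (hF.disjoint_erase he hp hr₀ hpr₀)]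
    · rw [List.map_cons, hedges, Move.edge, Finset.insert_erase hp]

lemma IsUniformRootedForest.card_add_card_mul (hk : 2 ≤ k) (hF : IsUniformRootedForest k H S) :
    S.card + H.card * (k - 1) = N := by
  obtain ⟨l, hl, hroots, hedges⟩ := exists_isLegalRun_of_isUniformRootedForest hk
    H.nodup_toList (by rwa [Finset.toList_toFinset])
  have hlen : l.length = H.card := by
    simpa using congrArg List.length hedges
  rw [← hroots, ← hlen]
  exact hl.card_roots_add hk

lemma IsUniformRootedForest.dvd_sub_card (hk : 2 ≤ k) (hF : IsUniformRootedForest k H S) :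
    k - 1 ∣ N - S.card :=
  ⟨H.card, by have := hF.card_add_card_mul hk; rw [mul_comm]; omega⟩

/-- `p.1` is the only vertex of the new edge joined to a root once that edge is deleted. -/
lemma IsLegalMove.eq_of_edge_eq (hk : 2 ≤ k) {s s' : Config N} {p p' : Move N}
    (hs : s.IsValid k) (hs' : s'.IsValid k) (hp : IsLegalMove k s p) (hp' : IsLegalMove k s' p')
    (hfst : s.1 = s'.1) (hroots : (s.addEdge p).roots = (s'.addEdge p').roots)
    (hedge : p.edge = p'.edge) : p = p' := by
  have hF := (hs.addEdge hk hp).isUniformRootedForest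
  have hp₁ : p.1 = p'.1 := by
    refine hF.eq_of_reach_erase (Finset.mem_insert_self _ _) (Finset.mem_insert_self _ _)
      (hedge ▸ Finset.mem_insert_self _ _) (hs.root_fst_mem_roots_addEdge hp)
      (hroots ▸ hs'.root_fst_mem_roots_addEdge hp') ?_ ?_
    · rw [hs.addEdge_fst_erase hk hp]; exact hs.reach_root p.1
    · rw [hs.addEdge_fst_erase hk hp, hfst]; exact hs'.reach_root p'.1
  have hp₂ : p.2 = p'.2 := by
    rw [← Finset.erase_insert hp.fst_notMem, ← Finset.erase_insert hp'.fst_notMem]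
    exact congrArg₂ Finset.erase hedge hp₁
  exact Prod.ext hp₁ hp₂

lemma IsLegalRun.eq_of_map_edge_eq (hk : 2 ≤ k) :
    ∀ {l l' : List (Move N)}, IsLegalRun k l → IsLegalRun k l' →
      (build l).roots = (build l').roots → l.map Move.edge = l'.map Move.edge → l = l'
  | [], [], _, _, _, _ => rfl
  | [], _ :: _, _, _, _, hedges | _ :: _, [], _, _, _, hedges => by simp at hedges
  | p :: l, p' :: l', hl, hl', hroots, hedges => by
    simp only [List.map_cons, List.cons.injEq] at hedges
    have hs := hl.1.isValid hk
    have hs' := hl'.1.isValid hk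
    have hpp' := hl.2.eq_of_edge_eq hk hs hs' hl'.2 (by rw [build_fst, build_fst, hedges.2])
      hroots hedges.1
    subst hpp'
    have hroots' : (build l).roots = (build l').roots := by
      rw [← Finset.sdiff_union_of_subset hl.2.snd_subset_roots, ← hs.roots_addEdge hl.2,
        ← Finset.sdiff_union_of_subset hl'.2.snd_subset_roots, ← hs'.roots_addEdge hl'.2]
      exact congrArg (· ∪ p.2) hroots
    rw [hl.1.eq_of_map_edge_eq hk hl'.1 hroots' hedges.2]

end Decomposition

section Counting

open Finset
open scoped Nat

variable {k : ℕ}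

noncomputable def legalMoves (k : ℕ) (s : Config N) : Finset (Move N) := {p | IsLegalMove k s p}

lemma card_legalMoves {s : Config N} (hs : s.IsValid k) :
    #(legalMoves k s) = N * (#s.roots - 1).choose (k - 1) := by
  have hfiber : ∀ u, ({T | IsLegalMove k s (u, T)} : Finset (Finset (Fin N))) =
      powersetCard (k - 1) (s.roots.erase (s.2 u)) := by
    intro u
    ext T
    simp only [mem_filter, mem_univ, true_and, mem_powersetCard, subset_erase]
    exact ⟨fun h => ⟨⟨h.snd_subset_roots, h.root_fst_notMem⟩, h.card_snd⟩,
      fun h => ⟨h.2, h.1.1, h.1.2⟩⟩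
  rw [legalMoves, card_filter, Fintype.sum_prod_type]
  simp only [← card_filter, hfiber, card_powersetCard,
    card_erase_of_mem (hs.root_mem_roots _), sum_const, card_univ, Fintype.card_fin, smul_eq_mul]

noncomputable def legalRuns (k : ℕ) : ℕ → Finset (List (Move N))
  | 0 => {[]}
  | i + 1 => (legalRuns k i).biUnion fun l => (legalMoves k (build l)).image (· :: l)

lemma mem_legalRuns {i : ℕ} {l : List (Move N)} :
    l ∈ legalRuns k i ↔ l.length = i ∧ IsLegalRun k l := by
  induction i generalizing l with
  | zero =>
    simp only [legalRuns, mem_singleton, List.length_eq_zero_iff, iff_self_and]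
    rintro rfl
    trivial
  | succ i ih =>
    cases l with
    | nil => simp [legalRuns]
    | cons p l => simp [legalRuns, legalMoves, ih, IsLegalRun, and_assoc, -Prod.exists]

lemma card_legalRuns (hk : 2 ≤ k) (i : ℕ) :
    #(legalRuns k i : Finset (List (Move N))) =
      ∏ j ∈ range i, N * (N - j * (k - 1) - 1).choose (k - 1) := by
  induction i with
  | zero => simp [legalRuns]
  | succ i ih =>
    have hdisj : ((legalRuns k i : Finset (List (Move N))) : Set (List (Move N))).PairwiseDisjoint
        fun l => (legalMoves k (build l)).image (· :: l) := by
      intro l₁ _ l₂ _ hne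
      simp only [Function.onFun, disjoint_left, mem_image]
      rintro _ ⟨p₁, -, rfl⟩ ⟨p₂, -, h⟩
      exact hne (List.cons_eq_cons.1 h).2.symm
    have hfiber : ∀ l ∈ (legalRuns k i : Finset (List (Move N))),
        #((legalMoves k (build l)).image (· :: l)) = N * (N - i * (k - 1) - 1).choose (k - 1) := by
      intro l hl
      obtain ⟨rfl, hlegal⟩ := mem_legalRuns.1 hl
      have hroots := hlegal.card_roots_add hk
      rw [card_image_of_injective _ fun _ _ h => (List.cons_eq_cons.1 h).1,
        card_legalMoves (hlegal.isValid hk),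
        show #(build l).roots = N - l.length * (k - 1) by omega]
    rw [legalRuns, card_biUnion hdisj, sum_congr rfl hfiber, sum_const, smul_eq_mul, ih,
      prod_range_succ]

noncomputable def rootedForests (k : ℕ) (S : Finset (Fin N)) : Finset (Finset (Finset (Fin N))) :=
  {H | IsUniformRootedForest k H S}

lemma rootedForests_empty (v : Fin N) : rootedForests k (∅ : Finset (Fin N)) = ∅ :=
  Finset.filter_eq_empty_iff.2 fun _ _ hF =>
    let ⟨_, ⟨hr, _⟩, _⟩ := hF.existsUnique_root v; Finset.notMem_empty _ hr

/-- The legal runs building a given rooted forest correspond to the orderings of its edges. -/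
lemma card_filter_legalRuns (hk : 2 ≤ k) {H : Finset (Finset (Fin N))} {S : Finset (Fin N)}
    (hF : IsUniformRootedForest k H S) :
    #{l ∈ legalRuns k #H | (build l).roots = S ∧ (build l).1 = H} = (#H)! := by
  have hperms : #H.toList.permutations.toFinset = (#H)! := by
    rw [List.toFinset_card_of_nodup (List.nodup_permutations _ H.nodup_toList),
      List.length_permutations, length_toList]
  rw [← hperms]
  refine card_bij (fun l _ => l.map Move.edge) (fun l hl => ?_) (fun l₁ hl₁ l₂ hl₂ h => ?_)
    (fun L hL => ?_)
  · obtain ⟨⟨-, hl⟩, -, hH⟩ := mem_filter.1 hl |>.imp_left mem_legalRuns.1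
    rw [List.mem_toFinset, List.mem_permutations]
    exact List.perm_of_nodup_nodup_toFinset_eq (hl.nodup_map_edge hk) H.nodup_toList
      (by rw [toList_toFinset, ← build_fst, hH])
  · obtain ⟨⟨-, hl₁⟩, hroots₁, -⟩ := mem_filter.1 hl₁ |>.imp_left mem_legalRuns.1
    obtain ⟨⟨-, hl₂⟩, hroots₂, -⟩ := mem_filter.1 hl₂ |>.imp_left mem_legalRuns.1
    exact hl₁.eq_of_map_edge_eq hk hl₂ (hroots₁.trans hroots₂.symm) h
  · rw [List.mem_toFinset, List.mem_permutations] at hL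
    have hLH : L.toFinset = H := by
      rw [← toList_toFinset H]; exact List.toFinset_eq_of_perm _ _ hL
    obtain ⟨l, hl, hroots, hedges⟩ := exists_isLegalRun_of_isUniformRootedForest hk
      (hL.nodup_iff.2 H.nodup_toList) (hLH ▸ hF)
    refine ⟨l, mem_filter.2 ⟨mem_legalRuns.2 ⟨?_, hl⟩, hroots, ?_⟩, hedges⟩
    · rw [← List.length_map Move.edge, hedges, hL.length_eq, length_toList]
    · rw [build_fst, hedges, hLH]

lemma card_legalRuns_eq_sum (hk : 2 ≤ k) {n m : ℕ} (hnm : n + m * (k - 1) = N) :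
    #(legalRuns k m : Finset (List (Move N))) =
      ∑ S ∈ powersetCard n (univ : Finset (Fin N)), #(rootedForests k S) * m ! := by
  let root : List (Move N) → Σ _ : Finset (Fin N), Finset (Finset (Fin N)) :=
    fun l => ⟨(build l).roots, (build l).1⟩
  have hmaps : Set.MapsTo root (legalRuns k m : Finset (List (Move N)))
      ((powersetCard n (univ : Finset (Fin N))).sigma (rootedForests k)) := by
    intro l hl
    obtain ⟨rfl, hlegal⟩ := mem_legalRuns.1 (mem_coe.1 hl)
    have := hlegal.card_roots_add hk
    simp only [root, mem_coe, mem_sigma, mem_powersetCard, subset_univ, true_and,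
      rootedForests, mem_filter, mem_univ]
    exact ⟨by omega, (hlegal.isValid hk).isUniformRootedForest⟩
  rw [card_eq_sum_card_fiberwise hmaps, sum_sigma]
  refine sum_congr rfl fun S hS => sum_const_nat fun H hH => ?_
  simp only [rootedForests, mem_filter, mem_univ, true_and] at hH
  obtain rfl : #H = m := by
    have := hH.card_add_card_mul hk
    rw [(mem_powersetCard.1 hS).2] at this
    exact Nat.eq_of_mul_eq_mul_right (by omega : 0 < k - 1) (by omega)
  rw [← card_filter_legalRuns hk hH]
  simp only [root, Sigma.mk.injEq, heq_eq_eq]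

end Counting

lemma exists_perm_finsetCongr_eq {α : Type*} [Fintype α] {S S' : Finset α}
    (h : S.card = S'.card) : ∃ σ : Equiv.Perm α, σ.finsetCongr S = S' := by
  let e : S ≃ S' := Fintype.equivOfCardEq (by simpa using h)
  refine ⟨e.extendSubtype, Finset.eq_of_subset_of_card_le (fun x hx => ?_) (by simp [h])⟩
  obtain ⟨y, hy, rfl⟩ := Finset.mem_map.1 (Equiv.finsetCongr_apply _ S ▸ hx)
  exact e.extendSubtype_mem y hy

section Relabel

open Finset

variable (σ : Equiv.Perm (Fin N)) {k : ℕ} {H : Finset (Finset (Fin N))} {S : Finset (Fin N)}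

lemma Reach.map_perm {u v : Fin N} (h : Reach H u v) :
    Reach (σ.finsetCongr.finsetCongr H) (σ u) (σ v) :=
  (Relation.ReflTransGen.lift σ (fun _ _ ⟨e, he, ha, hb⟩ =>
    ⟨σ.finsetCongr e, by simpa [Finset.map_map] using he, by simpa using ha, by simpa using hb⟩ :
      adj H ≤ Function.onFun (adj _) σ)) u v h

lemma HasCycle.map_perm (h : HasCycle H) : HasCycle (σ.finsetCongr.finsetCongr H) :=
  let ⟨m, v, E, hv, hE, hEH, hvE⟩ := h
  ⟨m, σ ∘ v, σ.finsetCongr ∘ E, σ.injective.comp hv, σ.finsetCongr.injective.comp hE,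
    fun i => by simpa [Finset.map_map] using hEH i, fun i => by simpa using hvE i⟩

lemma finsetCongr_symm_finsetCongr_apply (H : Finset (Finset (Fin N))) :
    σ.symm.finsetCongr.finsetCongr (σ.finsetCongr.finsetCongr H) = H := by
  rw [← Equiv.finsetCongr_symm, ← Equiv.finsetCongr_symm, Equiv.symm_apply_apply]

lemma IsUniformRootedForest.map_perm (hF : IsUniformRootedForest k H S) :
    IsUniformRootedForest k (σ.finsetCongr.finsetCongr H) (σ.finsetCongr S) where
  card_edge e he := by
    rw [Equiv.finsetCongr_apply, mem_map_equiv] at he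
    simpa [Equiv.finsetCongr_apply] using hF.card_edge _ he
  isForest hcyc := hF.isForest (finsetCongr_symm_finsetCongr_apply σ H ▸ hcyc.map_perm σ.symm)
  existsUnique_root v := by
    obtain ⟨r, ⟨hr, hvr⟩, hunique⟩ := hF.existsUnique_root (σ.symm v)
    refine ⟨σ r, ⟨by simpa using hr, by simpa using hvr.map_perm σ⟩, fun r' ⟨hr', hvr'⟩ => ?_⟩
    have := hvr'.map_perm σ.symm
    rw [finsetCongr_symm_finsetCongr_apply] at this
    rw [← hunique (σ.symm r') ⟨by simpa [Equiv.finsetCongr_apply] using hr', this⟩,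
      Equiv.apply_symm_apply]

lemma card_rootedForests_finsetCongr :
    #(rootedForests k (σ.finsetCongr S)) = #(rootedForests k S) := by
  refine (card_nbij' σ.symm.finsetCongr.finsetCongr σ.finsetCongr.finsetCongr (fun H hH => ?_)
    (fun H hH => ?_) (fun H _ => ?_) (fun H _ => ?_))
  · have hF := (mem_filter.1 hH).2.map_perm σ.symm
    rw [← Equiv.finsetCongr_symm, Equiv.symm_apply_apply] at hF
    exact mem_filter.2 ⟨mem_univ _, hF⟩
  · exact mem_filter.2 ⟨mem_univ _, (mem_filter.1 hH).2.map_perm σ⟩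
  · simpa using finsetCongr_symm_finsetCongr_apply σ.symm H
  · exact finsetCongr_symm_finsetCongr_apply σ H

end Relabel

lemma card_rootedForests_congr {k : ℕ} {S S' : Finset (Fin N)} (h : S.card = S'.card) :
    (rootedForests k S).card = (rootedForests k S').card := by
  obtain ⟨σ, rfl⟩ := exists_perm_finsetCongr_eq h
  exact (card_rootedForests_finsetCongr σ).symm

section Formula

open Finset
open scoped Nat

variable {k : ℕ}

lemma prod_choose_mul_factorial (d M : ℕ) :
    ∀ m, m * d < M → (∏ j ∈ range m, (M - j * d - 1).choose d) * d ! ^ m * (M - m * d - 1)! =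
      (M - 1)!
  | 0, _ => by simp
  | m + 1, hm => by
    have hchoose := Nat.choose_mul_factorial_mul_factorial (show d ≤ M - m * d - 1 by
      rw [add_mul, one_mul] at hm; omega)
    rw [show M - m * d - 1 - d = M - (m + 1) * d - 1 by rw [add_mul, one_mul]; omega] at hchoose
    rw [← prod_choose_mul_factorial d M m (by nlinarith), prod_range_succ, ← hchoose]
    ring

lemma choose_mul_card_rootedForests_mul_factorial (hk : 2 ≤ k) {S : Finset (Fin N)} {m : ℕ}
    (hSm : #S + m * (k - 1) = N) :
    N.choose #S * #(rootedForests k S) * m ! =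
      N ^ m * ∏ j ∈ range m, (N - j * (k - 1) - 1).choose (k - 1) := by
  have hsum := card_legalRuns_eq_sum hk hSm
  rw [sum_const_nat fun S' hS' => by
      rw [card_rootedForests_congr (mem_powersetCard.1 hS').2], card_powersetCard,
    card_univ, Fintype.card_fin, card_legalRuns hk, prod_mul_distrib, prod_const,
    card_range] at hsum
  rw [hsum, mul_assoc]

lemma card_rootedForests_mul (hk : 2 ≤ k) {S : Finset (Fin N)} {m : ℕ} (hS : 0 < #S)
    (hSm : #S + m * (k - 1) = N) :
    #(rootedForests k S) * m ! * (k - 1)! ^ m * N = #S * (N - #S)! * N ^ m := by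
  have hcount := choose_mul_card_rootedForests_mul_factorial hk hSm
  set n := #S
  set P := ∏ j ∈ range m, (N - j * (k - 1) - 1).choose (k - 1)
  have hprod : P * (k - 1)! ^ m * (n - 1)! = (N - 1)! := by
    rw [← prod_choose_mul_factorial (k - 1) N m (by omega), show N - m * (k - 1) - 1 = n - 1 by
      omega]
  refine Nat.eq_of_mul_eq_mul_right (mul_pos (Nat.choose_pos (show n ≤ N by omega))
    (Nat.factorial_pos (n - 1))) ?_
  calc #(rootedForests k S) * m ! * (k - 1)! ^ m * N * (N.choose n * (n - 1)!)
      = N.choose n * #(rootedForests k S) * m ! * ((k - 1)! ^ m * (n - 1)! * N) := by ring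
    _ = N ^ m * (N * (P * (k - 1)! ^ m * (n - 1)!)) := by rw [hcount]; ring
    _ = N ^ m * N ! := by rw [hprod, Nat.mul_factorial_pred (by omega)]
    _ = N ^ m * (N.choose n * n ! * (N - n)!) := by
      rw [Nat.choose_mul_factorial_mul_factorial (by omega)]
    _ = n * (N - n)! * N ^ m * (N.choose n * (n - 1)!) := by
      rw [← Nat.mul_factorial_pred (by omega : n ≠ 0)]; ring

end Formula

lemma numRootedForests_eq_card (N n k : ℕ) :
    numRootedForests N n k = (rootedForests k ({v | (v : ℕ) < n} : Finset (Fin N))).card := by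
  rw [numRootedForests, ← Set.ncard_coe_finset]
  congr 1
  ext H
  simp [rootedForests, IsRootedForest, isUniformRootedForest_iff]

/-- The exact count of `k`-uniform rooted forests with vertex set `[N]` and root set `[n]`:
`n·(N−n)!·N^{m̃−1}/(m̃!·((k−1)!)^{m̃})` when `m̃ = (N−n)/(k−1)` is a nonnegative integer,
and `0` otherwise. -/
theorem stmt1 (k N n : ℕ) (hk : 2 ≤ k) (hN : 1 ≤ N) (hn : n ≤ N) :
    if (k - 1) ∣ (N - n) then
      (numRootedForests N n k : ℝ) =
        n * (Nat.factorial (N - n)) *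
            (N : ℝ) ^ ((((N - n) / (k - 1) : ℕ) : ℤ) - 1) /
          ((Nat.factorial ((N - n) / (k - 1)) : ℝ) *
            (Nat.factorial (k - 1) : ℝ) ^ ((N - n) / (k - 1)))
    else numRootedForests N n k = 0 := by
  have hroots : ({v | (v : ℕ) < n} : Finset (Fin N)).card = n := by
    rw [Fin.card_filter_val_lt, min_eq_right hn]
  rw [numRootedForests_eq_card]
  split_ifs with hdiv
  · obtain ⟨m, hm⟩ := hdiv
    rw [hm, Nat.mul_div_cancel_left m (by omega), ← hm]
    rcases Nat.eq_zero_or_pos n with rfl | hn₀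
    · rw [show ({v | (v : ℕ) < 0} : Finset (Fin N)) = ∅ by simp, rootedForests_empty ⟨0, hN⟩]
      simp
    have hcount := card_rootedForests_mul (m := m) hk (hroots ▸ hn₀)
      (by rw [hroots, mul_comm]; omega)
    rw [hroots] at hcount
    have hN₀ : (N : ℝ) ≠ 0 := by positivity
    rw [zpow_sub_one₀ hN₀, zpow_natCast, eq_div_iff (by positivity)]
    field_simp
    exact_mod_cast hcount
  · exact Finset.card_eq_zero.2 (Finset.filter_eq_empty_iff.2 fun H _ hF =>
      hdiv (hroots ▸ hF.dvd_sub_card hk))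

end Stmt1
end

section
/- For every real α > 3/2, the equation λ·f_1(λ)·g_2(λ)/f_2(2λ) = α has exactly one positive solution λ*_α. Moreover, for every ε > 0 there exists ε' > 0 such that for all α, β ∈ (3/2, 3/2 + ε) one has |λ*_α − λ*_β| ≤ ε'·|α − β|. -/
open Filter Topology

namespace Stmt5

/-- `f_k(x) = e^x − Σ_{i<k} x^i/i!`. -/
noncomputable def fpo (k : ℕ) (x : ℝ) : ℝ :=
  Real.exp x - ∑ i ∈ Finset.range k, x ^ i / (Nat.factorial i : ℝ)

/-- `g_k(x) = e^x + k`. -/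
noncomputable def gpo (k : ℕ) (x : ℝ) : ℝ := Real.exp x + k

/-!
Write `ratio x = x f₁(x) g₂(x) / f₂(2x)`. Its derivative is `W(x) / f₂(2x)²`, where `W` is an
exponential polynomial that vanishes at `0` together with its first three derivatives, while
`W⁽⁴⁾ ≥ 6` on `[0, ∞)`; hence `W(x) ≥ x⁴/4`. Combined with `f₂(t) ≤ t²/2 · eᵗ` this gives
`ratio' x ≥ e^{-4x}/16 > 0`, so `ratio` is strictly increasing and its inverse is Lipschitz on
every bounded range. Existence of solutions follows from the intermediate value theorem, since
`ratio x ≤ 3/2 + 20x` for small `x` and `ratio x ≥ x/2` for `x ≥ 1`; the latter also confines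
the solutions for `α < 3/2 + ε` to `(0, 3 + 2ε]`.
-/

open Real Set Nat

lemma le_of_hasDerivAt_le_of_nonneg {f g f' g' : ℝ → ℝ} (hf : ∀ x, HasDerivAt f (f' x) x)
    (hg : ∀ x, HasDerivAt g (g' x) x) (h₀ : f 0 ≤ g 0) (h' : ∀ x, 0 < x → f' x ≤ g' x)
    {x : ℝ} (hx : 0 ≤ x) : f x ≤ g x := by
  have hmono : MonotoneOn (g - f) (Ici 0) := by
    refine monotoneOn_of_hasDerivWithinAt_nonneg (f' := g' - f') (convex_Ici 0)
      (fun y _ => ((hg y).sub (hf y)).continuousAt.continuousWithinAt)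
      (fun y _ => ((hg y).sub (hf y)).hasDerivWithinAt) fun y hy => ?_
    rw [interior_Ici] at hy
    exact sub_nonneg.2 (h' y hy)
  have := hmono self_mem_Ici hx hx
  simp only [Pi.sub_apply] at this
  linarith

lemma hasDerivAt_pow_div_factorial (n : ℕ) (x : ℝ) :
    HasDerivAt (fun y : ℝ => y ^ (n + 1) / ((n + 1)! : ℝ)) (x ^ n / n !) x := by
  refine ((hasDerivAt_pow (n + 1) x).div_const ((n + 1)! : ℝ)).congr_deriv ?_
  rw [Nat.factorial_succ]
  push_cast
  field_simp

noncomputable def expQuad (a b c : ℝ) (n : ℕ) (y : ℝ) : ℝ :=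
  (a + b * y + c * y ^ 2) * exp y ^ n

lemma hasDerivAt_expQuad (a b c : ℝ) (n : ℕ) (x : ℝ) :
    HasDerivAt (expQuad a b c n) (expQuad (b + n * a) (2 * c + n * b) (n * c) n x) x := by
  have hquad : HasDerivAt (fun y => a + b * y + c * y ^ 2) (b * 1 + c * (2 * x ^ 1)) x :=
    (((hasDerivAt_id x).const_mul b).const_add a).add
      (by simpa using (hasDerivAt_pow 2 x).const_mul c)
  refine (hquad.mul ((hasDerivAt_exp x).pow n)).congr_deriv ?_
  unfold expQuad
  cases n with
  | zero => simp; ring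
  | succ m => simp only [Pi.pow_apply]; push_cast; ring

/-- `ratioNumer 4` is the numerator of `ratio'` over `fpo 2 (2 * x) ^ 2`, and
`ratioNumer j` is its `(4 - j)`-th derivative. -/
noncomputable def ratioNumer : ℕ → ℝ → ℝ
  | 0 => fun y => expQuad 256 0 0 4 y + expQuad (-27) (-81) 0 3 y
      + expQuad (-176) (-224) (-64) 2 y + expQuad (-29) (-17) (-2) 1 y
  | 1 => fun y => expQuad 64 0 0 4 y + expQuad 0 (-27) 0 3 y
      + expQuad (-48) (-80) (-32) 2 y + expQuad (-16) (-13) (-2) 1 y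
  | 2 => fun y => expQuad 16 0 0 4 y + expQuad 3 (-9) 0 3 y
      + expQuad (-12) (-24) (-16) 2 y + expQuad (-7) (-9) (-2) 1 y
  | 3 => fun y => expQuad 4 0 0 4 y + expQuad 2 (-3) 0 3 y
      + expQuad (-4) (-4) (-8) 2 y + expQuad (-2) (-5) (-2) 1 y
  | 4 => fun y => expQuad 1 0 0 4 y + expQuad 1 (-1) 0 3 y
      + expQuad (-3) 2 (-4) 2 y + expQuad (-1) (-1) (-2) 1 y + 2
  | _ => fun _ => 0

lemma hasDerivAt_ratioNumer {j : ℕ} (hj : j < 4) (x : ℝ) :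
    HasDerivAt (ratioNumer (j + 1)) (ratioNumer j x) x := by
  have h := fun (a b c : ℝ) (n : ℕ) => hasDerivAt_expQuad a b c n x
  interval_cases j
  · have := (((h 64 0 0 4).add (h 0 (-27) 0 3)).add (h (-48) (-80) (-32) 2)).add
      (h (-16) (-13) (-2) 1)
    refine HasDerivAt.congr_deriv (f := ratioNumer 1) this ?_
    simp only [ratioNumer, expQuad]; push_cast; ring
  · have := (((h 16 0 0 4).add (h 3 (-9) 0 3)).add (h (-12) (-24) (-16) 2)).add
      (h (-7) (-9) (-2) 1)
    refine HasDerivAt.congr_deriv (f := ratioNumer 2) this ?_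
    simp only [ratioNumer, expQuad]; push_cast; ring
  · have := (((h 4 0 0 4).add (h 2 (-3) 0 3)).add (h (-4) (-4) (-8) 2)).add
      (h (-2) (-5) (-2) 1)
    refine HasDerivAt.congr_deriv (f := ratioNumer 3) this ?_
    simp only [ratioNumer, expQuad]; push_cast; ring
  · have := ((((h 1 0 0 4).add (h 1 (-1) 0 3)).add (h (-3) 2 (-4) 2)).add
      (h (-1) (-1) (-2) 1)).add_const 2
    refine HasDerivAt.congr_deriv (f := ratioNumer 4) this ?_
    simp only [ratioNumer, expQuad]; push_cast; ring

lemma six_le_ratioNumer_zero {x : ℝ} (hx : 0 ≤ x) : 6 ≤ ratioNumer 0 x := by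
  have hcubic : 1 + x + x ^ 2 / 2 + x ^ 3 / 6 ≤ exp x := by
    have h := sum_le_exp_of_nonneg hx 4
    simp only [Finset.sum_range_succ, Finset.sum_range_zero, Nat.factorial] at h
    norm_num at h
    linarith
  have hu1 : 1 ≤ exp x := one_le_exp hx
  set u := exp x
  -- bounding `u` and `u²` by `u³` leaves `u³ (256 u - 66 x² - 322 x - 232)`
  have key : 6 ≤ 256 * u - (66 * x ^ 2 + 322 * x + 232) := by
    nlinarith [sq_nonneg (x - 33 / 62), pow_nonneg hx 3]
  have hu3 : 1 ≤ u ^ 3 := one_le_pow₀ hu1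
  have h2 : u ^ 2 ≤ u ^ 3 := by nlinarith
  have h1 : u ≤ u ^ 3 := by nlinarith
  simp only [ratioNumer, expQuad]
  nlinarith [mul_le_mul_of_nonneg_left key (by positivity : (0 : ℝ) ≤ u ^ 3),
    mul_nonneg (by positivity : (0 : ℝ) ≤ 176 + 224 * x + 64 * x ^ 2) (sub_nonneg.2 h2),
    mul_nonneg (by positivity : (0 : ℝ) ≤ 29 + 17 * x + 2 * x ^ 2) (sub_nonneg.2 h1)]

lemma ratioNumer_succ_zero {j : ℕ} (hj : j < 4) : ratioNumer (j + 1) 0 = 0 := by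
  interval_cases j <;> norm_num [ratioNumer, expQuad]

lemma six_mul_pow_div_factorial_le_ratioNumer {j : ℕ} (hj : j ≤ 4) {x : ℝ} (hx : 0 ≤ x) :
    6 * x ^ j / j ! ≤ ratioNumer j x := by
  induction j generalizing x with
  | zero => simpa using six_le_ratioNumer_zero hx
  | succ j ih =>
    have hj' : j < 4 := by omega
    refine le_of_hasDerivAt_le_of_nonneg (f' := fun y => 6 * (y ^ j / j !))
      (fun y => (hasDerivAt_pow_div_factorial j y).const_mul 6) (hasDerivAt_ratioNumer hj')
      (by simp [ratioNumer_succ_zero hj']) (fun y hy => ?_) hx |>.trans_eq' (by ring)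
    simpa [mul_div_assoc] using ih hj'.le hy.le

lemma fpo_one (x : ℝ) : fpo 1 x = exp x - 1 := by simp [fpo]

lemma fpo_two (x : ℝ) : fpo 2 x = exp x - 1 - x := by
  simp [fpo, Finset.sum_range_succ]; ring

lemma fpo_two_two_mul (x : ℝ) : fpo 2 (2 * x) = exp x ^ 2 - 1 - 2 * x := by
  rw [fpo_two, ← exp_nat_mul]; norm_num

lemma gpo_two (x : ℝ) : gpo 2 x = exp x + 2 := by simp [gpo]

lemma fpo_two_pos {t : ℝ} (ht : t ≠ 0) : 0 < fpo 2 t := by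
  rw [fpo_two]; linarith [add_one_lt_exp ht]

lemma fpo_two_le {t : ℝ} (ht : 0 ≤ t) : fpo 2 t ≤ t ^ 2 / 2 * exp t := by
  rw [fpo_two]
  refine le_of_hasDerivAt_le_of_nonneg (f' := fun y => exp y - 1)
    (g' := fun y => (y + y ^ 2 / 2) * exp y)
    (fun y => ((hasDerivAt_exp y).sub_const 1).sub (hasDerivAt_id' y) |>.congr_deriv (by ring))
    (fun y => ((hasDerivAt_pow 2 y).div_const 2).mul (hasDerivAt_exp y) |>.congr_deriv
      (by push_cast; ring)) (by simp) (fun y hy => ?_) ht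
  have hinv : exp y * exp (-y) = 1 := by rw [← exp_add]; simp
  nlinarith [add_one_le_exp (-y), exp_pos y, sq_nonneg y]

noncomputable def ratio (x : ℝ) : ℝ := x * fpo 1 x * gpo 2 x / fpo 2 (2 * x)

lemma hasDerivAt_ratio {x : ℝ} (hx : 0 < x) :
    HasDerivAt ratio (ratioNumer 4 x / fpo 2 (2 * x) ^ 2) x := by
  have hD : exp x ^ 2 - 1 - 2 * x ≠ 0 := by
    rw [← fpo_two_two_mul]; exact (fpo_two_pos (by positivity)).ne'
  have hratio : ratio = fun y => y * (exp y - 1) * (exp y + 2) / (exp y ^ 2 - 1 - 2 * y) := by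
    funext y; rw [ratio, fpo_one, gpo_two, fpo_two_two_mul]
  have hN := ((hasDerivAt_id x).mul ((hasDerivAt_exp x).sub_const 1)).mul
    ((hasDerivAt_exp x).add_const 2)
  have hD' := (((hasDerivAt_exp x).pow 2).sub_const 1).sub ((hasDerivAt_id x).const_mul 2)
  rw [hratio]
  refine (hN.div hD' hD).congr_deriv ?_
  simp only [Pi.mul_apply, Pi.sub_apply, Pi.pow_apply, id, fpo_two_two_mul]
  congr 1
  simp only [ratioNumer, expQuad]
  push_cast
  ring

lemma exp_neg_div_le_deriv_ratio {x : ℝ} (hx : 0 < x) :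
    exp (-(4 * x)) / 16 ≤ ratioNumer 4 x / fpo 2 (2 * x) ^ 2 := by
  have hN : x ^ 4 / 4 ≤ ratioNumer 4 x := by
    have := six_mul_pow_div_factorial_le_ratioNumer le_rfl hx.le
    norm_num [Nat.factorial] at this
    linarith
  have hD0 := fpo_two_pos (t := 2 * x) (by positivity)
  have hD : fpo 2 (2 * x) ^ 2 ≤ 4 * x ^ 4 * exp (4 * x) := by
    have h := fpo_two_le (t := 2 * x) (by positivity)
    calc fpo 2 (2 * x) ^ 2 ≤ ((2 * x) ^ 2 / 2 * exp (2 * x)) ^ 2 := by gcongr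
      _ = 4 * x ^ 4 * exp (4 * x) := by rw [mul_pow, ← exp_nat_mul]; push_cast; ring_nf
  have hexp : exp (-(4 * x)) * exp (4 * x) = 1 := by rw [← exp_add]; simp
  rw [div_le_div_iff₀ (by norm_num) (by positivity)]
  calc exp (-(4 * x)) * fpo 2 (2 * x) ^ 2 ≤ exp (-(4 * x)) * (4 * x ^ 4 * exp (4 * x)) := by
        gcongr
    _ = 4 * x ^ 4 := by linear_combination 4 * x ^ 4 * hexp
    _ ≤ ratioNumer 4 x * 16 := by linarith

lemma strictMonoOn_ratio : StrictMonoOn ratio (Ioi 0) := by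
  refine strictMonoOn_of_hasDerivWithinAt_pos (convex_Ioi 0)
    (f' := fun x => ratioNumer 4 x / fpo 2 (2 * x) ^ 2)
    (fun x hx => (hasDerivAt_ratio hx).continuousAt.continuousWithinAt)
    (fun x hx => ?_) fun x hx => ?_ <;> rw [interior_Ioi] at hx
  · exact (hasDerivAt_ratio hx).hasDerivWithinAt
  · exact (exp_neg_div_le_deriv_ratio hx).trans_lt' (by positivity)

lemma half_le_ratio {x : ℝ} (hx : 1 ≤ x) : x / 2 ≤ ratio x := by
  have h2 : 2 ≤ exp x := by linarith [add_one_le_exp x]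
  have hD := fpo_two_pos (t := 2 * x) (by positivity)
  rw [ratio, le_div_iff₀ hD, fpo_one, gpo_two]
  rw [fpo_two_two_mul] at hD ⊢
  have hpos : 0 ≤ exp x ^ 2 / 2 + exp x - 3 / 2 + x := by nlinarith
  nlinarith [mul_nonneg (by linarith : (0 : ℝ) ≤ x) hpos]

lemma exp_le_cubic {x : ℝ} (h0 : 0 ≤ x) (h1 : x ≤ 1) :
    exp x ≤ 1 + x + x ^ 2 / 2 + 2 / 9 * x ^ 3 := by
  have h := exp_bound' h0 h1 (n := 3) (by norm_num)
  norm_num [Finset.sum_range_succ, Nat.factorial] at h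
  nlinarith [pow_nonneg h0 3]

lemma ratio_le_of_le_half {x : ℝ} (hx : 0 < x) (hx' : x ≤ 1 / 2) :
    ratio x ≤ 3 / 2 + 20 * x := by
  have hL := quadratic_le_exp_of_nonneg hx.le
  have hU := exp_le_cubic hx.le (by linarith)
  have hD := fpo_two_pos (t := 2 * x) (by positivity)
  have hsqU : exp x ^ 2 ≤ (1 + x + x ^ 2 / 2 + 2 / 9 * x ^ 3) ^ 2 := by
    gcongr
  have hsqL : (1 + x + x ^ 2 / 2) ^ 2 ≤ exp x ^ 2 := by
    gcongr
  rw [ratio, div_le_iff₀ hD, fpo_one, gpo_two]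
  rw [fpo_two_two_mul] at hD ⊢
  nlinarith [mul_pos hx hx, pow_pos hx 3,
    mul_nonneg (mul_nonneg hx.le hx.le) (show (0 : ℝ) ≤ 1 / 2 - x by linarith),
    mul_nonneg (pow_nonneg hx.le 3) (show (0 : ℝ) ≤ 1 / 2 - x by linarith)]

lemma exists_ratio_eq {α : ℝ} (hα : 3 / 2 < α) : ∃ l, 0 < l ∧ ratio l = α := by
  set a := min (1 / 2 : ℝ) ((α - 3 / 2) / 40)
  set b := max 1 (2 * α)
  have ha : 0 < a := lt_min (by norm_num) (by linarith)
  have hab : a ≤ b := (min_le_left _ _).trans (by linarith [le_max_left 1 (2 * α)])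
  have hlow : ratio a ≤ α := by
    linarith [ratio_le_of_le_half ha (min_le_left _ _),
      min_le_right (1 / 2 : ℝ) ((α - 3 / 2) / 40)]
  have hhigh : α ≤ ratio b := by
    linarith [half_le_ratio (le_max_left 1 (2 * α)), le_max_right 1 (2 * α)]
  obtain ⟨l, hl, rfl⟩ := intermediate_value_Icc hab
    (fun x hx => (hasDerivAt_ratio (ha.trans_le hx.1)).continuousAt.continuousWithinAt)
    ⟨hlow, hhigh⟩
  exact ⟨l, ha.trans_le hl.1, rfl⟩

lemma abs_sub_le_mul_abs_ratio_sub {M x y : ℝ} (hx : x ∈ Ioc 0 M) (hy : y ∈ Ioc 0 M) :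
    |x - y| ≤ 16 * exp (4 * M) * |ratio x - ratio y| := by
  wlog hxy : x ≤ y generalizing x y
  · rw [abs_sub_comm, abs_sub_comm (ratio x)]
    exact this hy hx (le_of_not_ge hxy)
  have hderiv : ∀ z ∈ interior (Ioc 0 M), exp (-(4 * M)) / 16 ≤ deriv ratio z := by
    intro z hz
    rw [interior_Ioc] at hz
    rw [(hasDerivAt_ratio hz.1).deriv]
    refine le_trans ?_ (exp_neg_div_le_deriv_ratio hz.1)
    gcongr
    exact hz.2.le
  have hgrow := (convex_Ioc 0 M).mul_sub_le_image_sub_of_le_deriv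
    (fun z hz => (hasDerivAt_ratio hz.1).continuousAt.continuousWithinAt)
    (fun z hz => (hasDerivAt_ratio (interior_subset hz).1).differentiableAt.differentiableWithinAt)
    hderiv x hx y hy hxy
  have hexp : exp (4 * M) * exp (-(4 * M)) = 1 := by rw [← exp_add]; simp
  rw [abs_sub_comm, abs_of_nonneg (sub_nonneg.2 hxy), abs_sub_comm,
    abs_of_nonneg (by nlinarith [exp_pos (-(4 * M))])]
  nlinarith [exp_pos (4 * M)]

/-- For every real `α > 3/2`, the equation `λ·f₁(λ)·g₂(λ)/f₂(2λ) = α` has exactly one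
positive solution; moreover, for every `ε > 0` there is `ε' > 0` such that for
`α, β ∈ (3/2, 3/2 + ε)` the corresponding solutions `lα, lβ` satisfy
`|lα − lβ| ≤ ε'·|α − β|`. -/
theorem stmt5 :
    (∀ α : ℝ, 3 / 2 < α →
      ∃! l : ℝ, 0 < l ∧ l * fpo 1 l * gpo 2 l / fpo 2 (2 * l) = α) ∧
    (∀ ε : ℝ, 0 < ε → ∃ ε' : ℝ, 0 < ε' ∧
      ∀ α β lα lβ : ℝ,
        α ∈ Set.Ioo (3 / 2 : ℝ) (3 / 2 + ε) → β ∈ Set.Ioo (3 / 2 : ℝ) (3 / 2 + ε) →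
        0 < lα → lα * fpo 1 lα * gpo 2 lα / fpo 2 (2 * lα) = α →
        0 < lβ → lβ * fpo 1 lβ * gpo 2 lβ / fpo 2 (2 * lβ) = β →
        |lα - lβ| ≤ ε' * |α - β|) := by
  refine ⟨fun α hα => ?_, fun ε _ => ⟨16 * exp (4 * (3 + 2 * ε)), by positivity, ?_⟩⟩
  · obtain ⟨l, hl, rfl⟩ := exists_ratio_eq hα
    exact ⟨l, ⟨hl, rfl⟩, fun m hm => strictMonoOn_ratio.injOn hm.1 hl hm.2⟩
  · rintro _ _ lα lβ hα hβ hlα rfl hlβ rfl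
    have hbound : ∀ l, 0 < l → ratio l < 3 / 2 + ε → l ∈ Ioc 0 (3 + 2 * ε) := by
      intro l hl hlε
      refine ⟨hl, ?_⟩
      rcases le_total l 1 with h | h
      · linarith
      · linarith [half_le_ratio h]
    exact abs_sub_le_mul_abs_ratio_sub (hbound lα hlα hα.2) (hbound lβ hlβ hβ.2)

end Stmt5
end

section
/- Let α > 0 and β be real constants, let φ(n) → 0, ψ(n) → 0, T_n → ∞ and s_n → ∞ be real sequences, fix z ∈ ℝ, and let P_n = z + ℤ. Define f_n(x) = exp( −α·x^2 + β·x + φ(n)·x^2 + ψ(n)·x ). Then (1/s_n) · Σ_{x ∈ P_n/s_n, |x| ≤ T_n} f_n(x) → exp( β^2/(4α) ) · sqrt(π/α) as n → ∞, where P_n/s_n = { p/s_n : p ∈ P_n }. -/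
open Filter Topology MeasureTheory
open scoped Real

/-!
The normalized lattice sum is exactly the integral of the step function that takes the value
`f_n((z + k)/s_n)` on the cell `[(z + k)/s_n, (z + k + 1)/s_n)` for each lattice point in
`[-T_n, T_n]` and vanishes elsewhere. A lattice point lies within `1/s_n` of every point of its
cell, so these step functions converge pointwise to `exp(-αx² + βx)`; once `φ(n) ≤ α/2` and
`|β + ψ(n)|` is bounded they are dominated by a fixed Gaussian. Dominated convergence gives the
limit `∫ exp(-αx² + βx) dx`, which is evaluated by completing the square.
-/

namespace Stmt10

theorem integral_exp_neg_mul_sq_add_mul {a : ℝ} (ha : 0 < a) (b : ℝ) :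
    ∫ x : ℝ, Real.exp (-a * x ^ 2 + b * x) = Real.exp (b ^ 2 / (4 * a)) * √(π / a) := by
  have complete_sq : ∀ x : ℝ, Real.exp (-a * x ^ 2 + b * x)
      = Real.exp (b ^ 2 / (4 * a)) * Real.exp (-a * (x - b / (2 * a)) ^ 2) := fun x => by
    rw [← Real.exp_add]; congr 1; field_simp; ring
  simp_rw [complete_sq]
  rw [integral_const_mul, integral_sub_right_eq_self (fun x => Real.exp (-a * x ^ 2)),
    integral_gaussian]

theorem exp_neg_mul_sq_add_mul_le {a b c B x y : ℝ} (hc : 0 < c) (hca : c ≤ a) (hb : |b| ≤ B)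
    (hxy : |y - x| ≤ 1) :
    Real.exp (-a * y ^ 2 + b * y)
      ≤ Real.exp (B ^ 2 / (2 * c) + c / 2) * Real.exp (-(c / 4) * x ^ 2) := by
  rw [← Real.exp_add, Real.exp_le_exp]
  have hby : b * y ≤ B * |y| :=
    (le_abs_self _).trans (by rw [abs_mul]; exact mul_le_mul_of_nonneg_right hb (abs_nonneg y))
  have amgm : B * |y| ≤ c / 2 * y ^ 2 + B ^ 2 / (2 * c) := by
    rw [← sq_abs y]
    have := sq_nonneg (c * |y| - B)
    field_simp
    nlinarith
  have hx : x ^ 2 / 2 - 1 ≤ y ^ 2 := by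
    have := abs_le.mp hxy
    nlinarith [sq_nonneg (x - 2 * y)]
  nlinarith [sq_nonneg y]

theorem mem_Ico_iff_floor_eq {z s x : ℝ} (hs : 0 < s) (k : ℤ) :
    x ∈ Set.Ico ((z + k) / s) ((z + k + 1) / s) ↔ ⌊s * x - z⌋ = k := by
  rw [Int.floor_eq_iff, Set.mem_Ico, div_le_iff₀ hs, lt_div_iff₀ hs]
  constructor <;> rintro ⟨h1, h2⟩ <;> constructor <;> linarith

theorem abs_floor_div_sub_le {z s : ℝ} (hs : 0 < s) (x : ℝ) :
    |(z + ⌊s * x - z⌋) / s - x| ≤ 1 / s := by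
  have h := (mem_Ico_iff_floor_eq (z := z) hs ⌊s * x - z⌋).mpr rfl
  rw [Set.mem_Ico, add_div _ 1] at h
  rw [abs_le]
  constructor <;> linarith [h.1, h.2]

noncomputable def riemannStep (z s : ℝ) (F : Finset ℤ) (f : ℝ → ℝ) (x : ℝ) : ℝ :=
  if ⌊s * x - z⌋ ∈ F then f ((z + ⌊s * x - z⌋) / s) else 0

theorem riemannStep_eq_sum_indicator {z s : ℝ} (hs : 0 < s) (F : Finset ℤ) (f : ℝ → ℝ) :
    riemannStep z s F f = fun x =>
      ∑ k ∈ F,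
        (Set.Ico ((z + k) / s) ((z + k + 1) / s)).indicator (fun _ => f ((z + k) / s)) x := by
  ext x
  simp only [Set.indicator_apply, mem_Ico_iff_floor_eq hs, Finset.sum_ite_eq, riemannStep]

theorem integral_riemannStep {z s : ℝ} (hs : 0 < s) (F : Finset ℤ) (f : ℝ → ℝ) :
    ∫ x, riemannStep z s F f x = 1 / s * ∑ k ∈ F, f ((z + k) / s) := by
  rw [riemannStep_eq_sum_indicator hs, integral_finsetSum, Finset.mul_sum]
  · refine Finset.sum_congr rfl fun k _ => ?_
    rw [integral_indicator_const _ measurableSet_Ico, Real.volume_real_Ico_of_le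
      (div_le_div_of_nonneg_right (by linarith) hs.le), smul_eq_mul]
    congr 1
    field_simp
    ring
  · exact fun k _ =>
      (integrableOn_const measure_Ico_lt_top.ne).integrable_indicator measurableSet_Ico

theorem measurable_riemannStep {z s : ℝ} (hs : 0 < s) (F : Finset ℤ) (f : ℝ → ℝ) :
    Measurable (riemannStep z s F f) := by
  rw [riemannStep_eq_sum_indicator hs]
  exact Finset.measurable_sum _ fun k _ => measurable_const.indicator measurableSet_Ico

theorem tendsto_riemannSum {ι : Type*} {l : Filter ι} [l.IsCountablyGenerated] (z : ℝ)
    {s : ι → ℝ} {F : ι → Finset ℤ} {g : ι → ℝ → ℝ} {g₀ G : ℝ → ℝ}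
    (hs : Tendsto s l atTop) (hF : ∀ x, ∀ᶠ i in l, ⌊s i * x - z⌋ ∈ F i)
    (hg : ∀ x, Tendsto (fun p : ι × ℝ => g p.1 p.2) (l ×ˢ 𝓝 x) (𝓝 (g₀ x)))
    (hG : Integrable G) (hdom : ∀ᶠ i in l, ∀ x y, |y - x| ≤ 1 → |g i y| ≤ G x) :
    Tendsto (fun i => 1 / s i * ∑ k ∈ F i, g i ((z + k) / s i)) l (𝓝 (∫ x, g₀ x)) := by
  have hs_pos : ∀ᶠ i in l, 1 ≤ s i := hs.eventually_ge_atTop 1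
  have hstep : Tendsto (fun i => ∫ x, riemannStep z (s i) (F i) (g i) x) l (𝓝 (∫ x, g₀ x)) := by
    refine tendsto_integral_filter_of_dominated_convergence G ?_ ?_ hG (ae_of_all _ fun x => ?_)
    · filter_upwards [hs_pos] with i hi
      exact (measurable_riemannStep (by linarith) _ _).aestronglyMeasurable
    · filter_upwards [hs_pos, hdom] with i hi hd
      refine ae_of_all _ fun x => ?_
      rw [Real.norm_eq_abs, riemannStep]
      split_ifs
      · refine hd x _ ((abs_floor_div_sub_le (by linarith) x).trans ?_)
        rw [div_le_one (by linarith)]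
        exact hi
      · simpa using (abs_nonneg _).trans (hd x x (by simp))
    · have hy : Tendsto (fun i => (z + ⌊s i * x - z⌋) / s i) l (𝓝 x) := by
        rw [tendsto_iff_norm_sub_tendsto_zero]
        refine squeeze_zero' (Eventually.of_forall fun i => norm_nonneg _) ?_
          (tendsto_const_nhds (x := (1 : ℝ)) |>.div_atTop hs)
        filter_upwards [hs_pos] with i hi
        exact abs_floor_div_sub_le (by linarith) x
      refine ((hg x).comp (tendsto_id.prodMk hy)).congr' ?_
      filter_upwards [hF x] with i hi
      simp only [Function.comp_apply, id, riemannStep, if_pos hi]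
  refine hstep.congr' ?_
  filter_upwards [hs_pos] with i hi
  exact integral_riemannStep (by linarith) _ _

theorem mem_Icc_ceil_floor_iff {z s T : ℝ} (hs : 0 < s) (k : ℤ) :
    k ∈ Finset.Icc ⌈-(T * s) - z⌉ ⌊T * s - z⌋ ↔ |(z + k) / s| ≤ T := by
  rw [Finset.mem_Icc, Int.ceil_le, Int.le_floor, abs_le, le_div_iff₀ hs, div_le_iff₀ hs]
  constructor <;> rintro ⟨h1, h2⟩ <;> constructor <;> linarith

theorem finsum_mem_lattice_eq_sum {M : Type*} [AddCommMonoid M] {z s T : ℝ} (hs : 0 < s)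
    (f : ℝ → M) :
    ∑ᶠ x ∈ {x : ℝ | (∃ k : ℤ, x = (z + k) / s) ∧ |x| ≤ T}, f x
      = ∑ k ∈ Finset.Icc ⌈-(T * s) - z⌉ ⌊T * s - z⌋, f ((z + k) / s) := by
  have hset : {x : ℝ | (∃ k : ℤ, x = (z + k) / s) ∧ |x| ≤ T}
      = ((Finset.Icc ⌈-(T * s) - z⌉ ⌊T * s - z⌋).image fun k : ℤ => (z + k) / s) := by
    ext x
    simp only [Set.mem_ofPred_eq, Finset.coe_image, Set.mem_image, Finset.mem_coe,
      mem_Icc_ceil_floor_iff hs]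
    constructor
    · rintro ⟨⟨k, rfl⟩, hk⟩
      exact ⟨k, hk, rfl⟩
    · rintro ⟨k, hk, rfl⟩
      exact ⟨⟨k, rfl⟩, hk⟩
  rw [hset, finsum_mem_coe_finset, Finset.sum_image]
  intro k _ k' _ h
  simpa [div_left_inj' hs.ne'] using h

theorem eventually_floor_mem_Icc {ι : Type*} {l : Filter ι} {s T : ι → ℝ} (z : ℝ)
    (hs : Tendsto s l atTop) (hT : Tendsto T l atTop) (x : ℝ) :
    ∀ᶠ i in l, ⌊s i * x - z⌋ ∈ Finset.Icc ⌈-(T i * s i) - z⌉ ⌊T i * s i - z⌋ := by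
  filter_upwards [hs.eventually_ge_atTop 1, hT.eventually_ge_atTop (|x| + 1)] with i hs1 hTx
  rw [mem_Icc_ceil_floor_iff (by linarith)]
  have hdist := abs_floor_div_sub_le (z := z) (by linarith : 0 < s i) x
  have hinv : 1 / s i ≤ 1 := by rw [div_le_one (by linarith)]; exact hs1
  linarith [abs_sub_abs_le_abs_sub ((z + ⌊s i * x - z⌋) / s i) x]

/-- Lattice-sum approximation of a Gaussian integral: for `α > 0`, `φ(n), ψ(n) → 0`,
`T_n, s_n → ∞` and the lattice `P_n = z + ℤ`,
`(1/s_n)·Σ_{x ∈ P_n/s_n, |x| ≤ T_n} exp(−αx² + βx + φ(n)x² + ψ(n)x)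
  → exp(β²/(4α))·sqrt(π/α)`. -/
theorem stmt10 (α β z : ℝ) (hα : 0 < α)
    (φ ψ T s : ℕ → ℝ)
    (hφ : Tendsto φ atTop (𝓝 0)) (hψ : Tendsto ψ atTop (𝓝 0))
    (hT : Tendsto T atTop atTop) (hs : Tendsto s atTop atTop) :
    Tendsto (fun n : ℕ =>
        (1 / s n) *
          ∑ᶠ x ∈ {x : ℝ | (∃ k : ℤ, x = (z + k) / s n) ∧ |x| ≤ T n},
            Real.exp (-α * x ^ 2 + β * x + φ n * x ^ 2 + ψ n * x))
      atTop (𝓝 (Real.exp (β ^ 2 / (4 * α)) * Real.sqrt (π / α))) := by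
  have ha : Tendsto (fun n => α - φ n) atTop (𝓝 α) := by simpa using tendsto_const_nhds.sub hφ
  have hb : Tendsto (fun n => β + ψ n) atTop (𝓝 β) := by simpa using tendsto_const_nhds.add hψ
  have hsum : ∀ᶠ n in atTop, 1 / s n * ∑ k ∈ Finset.Icc ⌈-(T n * s n) - z⌉ ⌊T n * s n - z⌋,
        Real.exp (-(α - φ n) * ((z + k) / s n) ^ 2 + (β + ψ n) * ((z + k) / s n))
      = 1 / s n * ∑ᶠ x ∈ {x : ℝ | (∃ k : ℤ, x = (z + k) / s n) ∧ |x| ≤ T n},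
          Real.exp (-α * x ^ 2 + β * x + φ n * x ^ 2 + ψ n * x) := by
    filter_upwards [hs.eventually_gt_atTop 0] with n hn
    refine congrArg (1 / s n * ·) ((Finset.sum_congr rfl fun k _ => ?_).trans
      (finsum_mem_lattice_eq_sum hn _).symm)
    ring_nf
  rw [← integral_exp_neg_mul_sq_add_mul hα β]
  refine (tendsto_riemannSum z (F := fun n => Finset.Icc ⌈-(T n * s n) - z⌉ ⌊T n * s n - z⌋)
    (g := fun n y => Real.exp (-(α - φ n) * y ^ 2 + (β + ψ n) * y)) hs
    (eventually_floor_mem_Icc z hs hT) (fun x => ?_)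
    ((integrable_exp_neg_mul_sq (by positivity : 0 < α / 2 / 4)).const_mul
      (Real.exp ((|β| + 1) ^ 2 / (2 * (α / 2)) + α / 2 / 2))) ?_).congr' hsum
  · exact (((ha.comp tendsto_fst).neg.mul (tendsto_snd.pow 2)).add
      ((hb.comp tendsto_fst).mul tendsto_snd)).rexp
  · filter_upwards [ha.eventually (le_mem_nhds (half_lt_self hα)),
      hb.abs.eventually (ge_mem_nhds (lt_add_one |β|))] with n han hbn x y hxy
    rw [abs_of_pos (Real.exp_pos _)]
    exact exp_neg_mul_sq_add_mul_le (by positivity) han hbn hxy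

end Stmt10
end

section
/- For every α > 0 the equation (2λ·f_1(λ)·g_2(λ) − 3·f_2(2λ)) / (f_1(λ)·g_1(λ)) = α has a unique positive solution λ(α). Moreover, if (α_n) is a sequence of positive reals with α_n → 0, then λ(α_n) → 0. -/
open Filter Topology

namespace Stmt14

/-- `f_k(x) = e^x − Σ_{i<k} x^i/i!`. -/
noncomputable def fpo (k : ℕ) (x : ℝ) : ℝ :=
  Real.exp x - ∑ i ∈ Finset.range k, x ^ i / (Nat.factorial i : ℝ)

/-- `g_k(x) = e^x + k`. -/
noncomputable def gpo (k : ℕ) (x : ℝ) : ℝ := Real.exp x + k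

/-!
Multiplying numerator and denominator by `e^{-λ}/2` turns the left-hand side into
`φ(λ) = λ (2 cosh λ + 1) / sinh λ - 3`. The numerator of `φ'` is
`sinh λ (2 cosh λ + 1) - λ (cosh λ + 2)`, which is positive because `sinh λ > λ` and
`cosh λ ≥ 1`. Moreover `φ(λ) → 0` as `λ → 0+` since `sinh λ / λ → 1`, and `φ(λ) ≥ 2λ - 3`.
Hence `φ` is an increasing bijection of `(0, ∞)` onto itself, and `φ(λₙ) = αₙ → 0`
forces `λₙ → 0`.
-/

open Set Real

section StrictMonoOnIoi

variable {F : ℝ → ℝ} {a b : ℝ}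

theorem _root_.StrictMonoOn.lt_of_tendsto_nhdsGT (hF : StrictMonoOn F (Ioi a))
    (hlim : Tendsto F (𝓝[>] a) (𝓝 b)) {x : ℝ} (hx : a < x) : b < F x := by
  have hm : a < (a + x) / 2 := by linarith
  have hle : b ≤ F ((a + x) / 2) := by
    refine le_of_tendsto hlim ?_
    filter_upwards [Ioo_mem_nhdsGT hm] with y hy
    exact (hF hy.1 hm hy.2).le
  exact hle.trans_lt (hF hm hx (by linarith))

theorem _root_.StrictMonoOn.existsUnique_eq_of_tendsto (hF : StrictMonoOn F (Ioi a))
    (hcont : ContinuousOn F (Ioi a)) (hbot : Tendsto F (𝓝[>] a) (𝓝 b))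
    (htop : Tendsto F atTop atTop) {c : ℝ} (hc : b < c) :
    ∃! x, a < x ∧ F x = c := by
  obtain ⟨x₀, hx₀c, hx₀ : a < x₀⟩ :=
    ((hbot.eventually_lt_const hc).and self_mem_nhdsWithin).exists
  obtain ⟨x, hx, hFx⟩ := intermediate_value_Ioi
    (hcont.mono fun y hy => hx₀.trans_le (mem_Ici.mp hy)) htop (mem_Ioi.mpr hx₀c)
  have hax : a < x := hx₀.trans hx
  exact ⟨x, ⟨hax, hFx⟩, fun y ⟨hay, hFy⟩ => hF.injOn hay hax (hFy.trans hFx.symm)⟩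

theorem _root_.StrictMonoOn.tendsto_of_tendsto_comp {ι : Type*} {L : Filter ι} {u : ι → ℝ}
    (hF : StrictMonoOn F (Ioi a)) (hlim : Tendsto F (𝓝[>] a) (𝓝 b))
    (hu : ∀ᶠ i in L, a < u i) (hFu : Tendsto (fun i => F (u i)) L (𝓝 b)) :
    Tendsto u L (𝓝 a) := by
  refine tendsto_order.mpr ⟨fun c hc => hu.mono fun i hi => hc.trans hi, fun c hc => ?_⟩
  filter_upwards [hu, hFu.eventually_lt_const (hF.lt_of_tendsto_nhdsGT hlim hc)] with i hi hFi
  exact (hF.lt_iff_lt hi hc).mp hFi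

end StrictMonoOnIoi

noncomputable def phi (l : ℝ) : ℝ := l * (2 * cosh l + 1) / sinh l - 3

theorem ratio_eq_phi {l : ℝ} (hl : 0 < l) :
    (2 * l * fpo 1 l * gpo 2 l - 3 * fpo 2 (2 * l)) / (fpo 1 l * gpo 1 l) = phi l := by
  have he : 1 < exp l := one_lt_exp_iff.mpr hl
  have he1 : exp l - 1 ≠ 0 := by linarith
  have he2 : exp l ^ 2 - 1 ≠ 0 := by nlinarith
  simp only [phi, fpo, gpo, cosh_eq, sinh_eq, Finset.sum_range_succ, Finset.sum_range_zero,
    Nat.factorial_zero, Nat.factorial_one, Nat.cast_one, Nat.cast_ofNat, pow_zero, pow_one,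
    div_one, zero_add, two_mul l, exp_add, exp_neg]
  field_simp
  ring

theorem hasDerivAt_phi {l : ℝ} (hl : sinh l ≠ 0) :
    HasDerivAt phi ((sinh l * (2 * cosh l + 1) - l * (cosh l + 2)) / sinh l ^ 2) l := by
  have h : HasDerivAt (fun x => x * (2 * cosh x + 1) / sinh x - 3)
      (((1 * (2 * cosh l + 1) + l * (2 * sinh l)) * sinh l - l * (2 * cosh l + 1) * cosh l)
        / sinh l ^ 2) l :=
    (((hasDerivAt_id' l).mul (((hasDerivAt_cosh l).const_mul 2).add_const 1)).div
      (hasDerivAt_sinh l) hl).sub_const 3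
  refine h.congr_deriv ?_
  rw [div_left_inj' (pow_ne_zero 2 hl)]
  linear_combination (-2 * l) * cosh_sq_sub_sinh_sq l

theorem self_mul_cosh_add_two_lt {l : ℝ} (hl : 0 < l) :
    l * (cosh l + 2) < sinh l * (2 * cosh l + 1) := by
  have h1 := one_le_cosh l
  nlinarith [self_lt_sinh_iff.mpr hl]

theorem continuousOn_phi : ContinuousOn phi (Ioi 0) := fun _ hl =>
  (hasDerivAt_phi (sinh_pos_iff.mpr hl).ne').continuousAt.continuousWithinAt

theorem phi_strictMonoOn : StrictMonoOn phi (Ioi 0) := by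
  refine strictMonoOn_of_deriv_pos (convex_Ioi 0) continuousOn_phi fun l hl => ?_
  rw [interior_Ioi] at hl
  rw [(hasDerivAt_phi (sinh_pos_iff.mpr hl).ne').deriv]
  exact div_pos (sub_pos.mpr (self_mul_cosh_add_two_lt hl)) (pow_pos (sinh_pos_iff.mpr hl) 2)

theorem tendsto_phi_nhdsGT_zero : Tendsto phi (𝓝[>] 0) (𝓝 0) := by
  have hslope : Tendsto (fun l => sinh l / l) (𝓝[>] 0) (𝓝 1) := by
    have h := hasDerivAt_iff_tendsto_slope_zero.mp (hasDerivAt_sinh 0)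
    simp only [zero_add, sinh_zero, sub_zero, cosh_zero, smul_eq_mul] at h
    refine (h.mono_left (nhdsGT_le_nhdsNE 0)).congr fun l => ?_
    rw [inv_mul_eq_div]
  have hcosh : Tendsto (fun l => 2 * cosh l + 1) (𝓝[>] 0) (𝓝 3) := by
    refine (Continuous.tendsto' (by fun_prop) 0 3 ?_).mono_left nhdsWithin_le_nhds
    norm_num
  have h := (hcosh.div hslope one_ne_zero).sub_const 3
  rw [div_one, sub_self] at h
  refine h.congr fun l => ?_
  rw [phi, Pi.div_apply, div_div_eq_mul_div, mul_comm]

theorem two_mul_sub_three_le_phi {l : ℝ} (hl : 0 < l) : 2 * l - 3 ≤ phi l := by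
  have hs := sinh_pos_iff.mpr hl
  rw [phi, sub_le_sub_iff_right, le_div_iff₀ hs]
  nlinarith [sinh_lt_cosh l]

theorem tendsto_phi_atTop : Tendsto phi atTop atTop := by
  have hlin : Tendsto (fun l : ℝ => 2 * l - 3) atTop atTop := by
    simpa [sub_eq_add_neg] using
      tendsto_atTop_add_const_right atTop (-3) (tendsto_id.const_mul_atTop two_pos)
  refine tendsto_atTop_mono' atTop ?_ hlin
  filter_upwards [eventually_gt_atTop 0] with l hl
  exact two_mul_sub_three_le_phi hl

/-- For every `α > 0` the equation
`(2λ·f₁(λ)·g₂(λ) − 3·f₂(2λ))/(f₁(λ)·g₁(λ)) = α` has a unique positive solution, and if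
`α_n → 0` (with `α_n > 0`) then the corresponding solutions tend to `0`. -/
theorem stmt14 :
    (∀ α : ℝ, 0 < α →
      ∃! l : ℝ, 0 < l ∧
        (2 * l * fpo 1 l * gpo 2 l - 3 * fpo 2 (2 * l)) / (fpo 1 l * gpo 1 l) = α) ∧
    (∀ a l : ℕ → ℝ, (∀ n, 0 < a n) → Tendsto a atTop (𝓝 0) →
      (∀ n, 0 < l n ∧
        (2 * l n * fpo 1 (l n) * gpo 2 (l n) - 3 * fpo 2 (2 * l n)) /
          (fpo 1 (l n) * gpo 1 (l n)) = a n) →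
      Tendsto l atTop (𝓝 0)) := by
  refine ⟨fun α hα => ?_, fun a l _ ha hl => ?_⟩
  · refine (existsUnique_congr fun l => and_congr_right fun hl => ?_).mpr
      (phi_strictMonoOn.existsUnique_eq_of_tendsto continuousOn_phi tendsto_phi_nhdsGT_zero
        tendsto_phi_atTop hα)
    rw [ratio_eq_phi hl]
  · refine phi_strictMonoOn.tendsto_of_tendsto_comp tendsto_phi_nhdsGT_zero
      (Eventually.of_forall fun n => (hl n).1) (ha.congr fun n => ?_)
    rw [← (hl n).2, ratio_eq_phi (hl n).1]

end Stmt14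
end
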